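/- arXiv:math/0308175 — 13 statements merged into one kernel-verified Lean document; each statement's English description precedes it below -/
import Mathlib

section
/- Periodic solution of the forward variance equation (equations (fps4)–(fps6)). The function vper₋ is T-periodic, continuously differentiable, and satisfies the differential equation vper₋′(t) = −2a(t) vper₋(t) + g(t)² for all t. Moreover, for all t ≥ t₀ one has the relation v₋(t,t₀) = vper₋(t) − e^{−2α(t,t₀)} vper₋(t₀). -/
/-!
Write `v(t, t₀) = ∫_{t₀}^t e^{-2α(t,s)} g(s)² ds`. Splitting the integral gives the cocycle
identity `v(t, t₀) = v(t, s) + e^{-2α(t,s)} v(s, t₀)`, and periodicity of `a` and `g` makes `v`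
invariant under the diagonal shift by `T`. Since `vper₋(t) = v(t + T, t) / (1 - e^{-2α(T)})`,
these two facts give periodicity and the relation with `v₋`, while writing
`v(t + T, t) = v(t + T, 0) - e^{-2α(T)} v(t, 0)` reduces the differential equation to the one
satisfied by `t ↦ v(t, 0)`.
-/

open MeasureTheory intervalIntegral

theorem integral_add_period_of_periodic {a : ℝ → ℝ} {T : ℝ} (ha : Continuous a)
    (haT : Function.Periodic a T) (t : ℝ) :
    ∫ u in (0 : ℝ)..t + T, a u = (∫ u in (0 : ℝ)..t, a u) + ∫ u in (0 : ℝ)..T, a u := by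
  simpa using haT.intervalIntegral_add_eq_add 0 t (ha.intervalIntegrable · ·)

section ForwardVariance

variable {α g a : ℝ → ℝ} {T : ℝ}

noncomputable def forwardVariance (α g : ℝ → ℝ) (t t₀ : ℝ) : ℝ :=
  ∫ s in t₀..t, Real.exp (-2 * (α t - α s)) * g s ^ 2

theorem forwardVariance_eq_exp_mul_integral (t t₀ : ℝ) :
    forwardVariance α g t t₀ =
      Real.exp (-2 * α t) * ∫ s in t₀..t, Real.exp (2 * α s) * g s ^ 2 := by
  rw [forwardVariance, ← intervalIntegral.integral_const_mul]
  congr 1 with s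
  rw [← mul_assoc, ← Real.exp_add]
  ring_nf

theorem forwardVariance_cocycle (hα : Continuous α) (hg : Continuous g) (t s t₀ : ℝ) :
    forwardVariance α g t t₀ =
      forwardVariance α g t s + Real.exp (-2 * (α t - α s)) * forwardVariance α g s t₀ := by
  have hcont : Continuous fun s => Real.exp (2 * α s) * g s ^ 2 := by fun_prop
  have hexp : Real.exp (-2 * (α t - α s)) * Real.exp (-2 * α s) = Real.exp (-2 * α t) := by
    rw [← Real.exp_add]
    ring_nf
  simp only [forwardVariance_eq_exp_mul_integral]
  rw [← integral_add_adjacent_intervals (hcont.intervalIntegrable t₀ s)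
    (hcont.intervalIntegrable s t), ← mul_assoc, hexp]
  ring

theorem forwardVariance_add_period (hαT : ∀ s, α (s + T) = α s + α T)
    (hgT : Function.Periodic g T) (t t₀ : ℝ) :
    forwardVariance α g (t + T) (t₀ + T) = forwardVariance α g t t₀ := by
  rw [forwardVariance, ← integral_comp_add_right _ T, forwardVariance]
  congr 1 with s
  rw [hgT, hαT, hαT]
  ring_nf

theorem hasDerivAt_forwardVariance (hα : ∀ t, HasDerivAt α (a t) t)
    (hg : Continuous g) (t₀ t : ℝ) :
    HasDerivAt (fun t => forwardVariance α g t t₀)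
      (-2 * a t * forwardVariance α g t t₀ + g t ^ 2) t := by
  have hαc : Continuous α := continuous_iff_continuousAt.mpr fun t => (hα t).continuousAt
  have hprim := ((by fun_prop : Continuous fun s => Real.exp (2 * α s) * g s ^ 2)
    |>.integral_hasStrictDerivAt t₀ t).hasDerivAt
  have hexp : Real.exp (-2 * α t) * Real.exp (2 * α t) = 1 := by
    rw [← Real.exp_add]
    simp
  simp only [forwardVariance_eq_exp_mul_integral]
  refine (((hα t).const_mul (-2)).exp.mul hprim).congr_deriv ?_
  linear_combination (g t ^ 2) * hexp

theorem forwardVariance_add_period_sub (hα : Continuous α) (hg : Continuous g)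
    (hαT : ∀ s, α (s + T) = α s + α T) (hgT : Function.Periodic g T) (t t₀ : ℝ) :
    forwardVariance α g (t + T) t
        - Real.exp (-2 * (α t - α t₀)) * forwardVariance α g (t₀ + T) t₀ =
      (1 - Real.exp (-2 * α T)) * forwardVariance α g t t₀ := by
  have hleft := forwardVariance_cocycle hα hg (t + T) t t₀
  have hright := forwardVariance_cocycle hα hg (t + T) (t₀ + T) t₀
  rw [forwardVariance_add_period hαT hgT] at hright
  rw [hαT, hαT, add_sub_add_right_eq_sub] at hright
  rw [hαT, add_sub_cancel_left] at hleft
  linear_combination hright - hleft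

theorem hasDerivAt_forwardVariance_add_period (hα : ∀ t, HasDerivAt α (a t) t)
    (hg : Continuous g) (haT : Function.Periodic a T) (hαT : ∀ s, α (s + T) = α s + α T)
    (hgT : Function.Periodic g T) (t : ℝ) :
    HasDerivAt (fun t => forwardVariance α g (t + T) t)
      (-2 * a t * forwardVariance α g (t + T) t + (1 - Real.exp (-2 * α T)) * g t ^ 2) t := by
  have hαc : Continuous α := continuous_iff_continuousAt.mpr fun t => (hα t).continuousAt
  have hsplit : ∀ t, forwardVariance α g (t + T) t =
      forwardVariance α g (t + T) 0 - Real.exp (-2 * α T) * forwardVariance α g t 0 := by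
    intro t
    rw [forwardVariance_cocycle hαc hg (t + T) t 0, hαT, add_sub_cancel_left]
    ring
  have hshift := (hasDerivAt_forwardVariance hα hg 0 (t + T)).comp_add_const t T
  rw [haT, hgT] at hshift
  rw [funext hsplit, hsplit]
  refine (hshift.sub ((hasDerivAt_forwardVariance hα hg 0 t).const_mul _)).congr_deriv ?_
  ring

end ForwardVariance

theorem periodic_forward_variance_general
    (T : ℝ) (hT : 0 < T) (a g : ℝ → ℝ)
    (ha : Continuous a) (hg : Continuous g)
    (haper : ∀ t, a (t + T) = a t) (hgper : ∀ t, g (t + T) = g t)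
    (a0 : ℝ) (ha0 : 0 < a0)
    (halb : ∀ t, a0 ≤ a t)
    (α : ℝ → ℝ) (hα : ∀ t, α t = ∫ u in (0:ℝ)..t, a u)
    (lam : ℝ) (hlam : lam = α T / T)
    (vper : ℝ → ℝ)
    (hvper : ∀ t, vper t = (1 - Real.exp (-2 * lam * T))⁻¹ *
      ∫ s in t..t + T, Real.exp (-2 * (α (t + T) - α s)) * g s ^ 2)
    (vm : ℝ → ℝ → ℝ)
    (hvm : ∀ t t0, vm t t0 = ∫ s in t0..t, Real.exp (-2 * (α t - α s)) * g s ^ 2) :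
    (∀ t, vper (t + T) = vper t)
    ∧ (∀ t, HasDerivAt vper (-2 * a t * vper t + g t ^ 2) t)
    ∧ Continuous (fun t => -2 * a t * vper t + g t ^ 2)
    ∧ (∀ t0 t, t0 ≤ t →
        vm t t0 = vper t - Real.exp (-2 * (α t - α t0)) * vper t0) := by
  obtain rfl : vm = forwardVariance α g := funext₂ hvm
  have hαd : ∀ t, HasDerivAt α (a t) t := fun t => by
    rw [funext hα]
    exact (ha.integral_hasStrictDerivAt 0 t).hasDerivAt
  have hαT : ∀ t, α (t + T) = α t + α T := fun t => by
    simpa only [hα] using integral_add_period_of_periodic ha haper t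
  have hαc : Continuous α := continuous_iff_continuousAt.mpr fun t => (hαd t).continuousAt
  have hc : 1 - Real.exp (-2 * α T) ≠ 0 := by
    refine (sub_pos.mpr (Real.exp_lt_one_iff.mpr ?_)).ne'
    have := intervalIntegral_pos_of_pos_on (ha.intervalIntegrable 0 T)
      (fun x _ => ha0.trans_le (halb x)) hT
    linarith [hα T]
  have hvper_eq :
      vper = fun t => (1 - Real.exp (-2 * α T))⁻¹ * forwardVariance α g (t + T) t :=
    funext fun t => by
      rw [hvper, hlam, mul_assoc, div_mul_cancel₀ _ hT.ne']
      rfl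
  have hder : ∀ t, HasDerivAt vper (-2 * a t * vper t + g t ^ 2) t := fun t => by
    rw [hvper_eq]
    refine ((hasDerivAt_forwardVariance_add_period hαd hg haper hαT hgper t).const_mul
      _).congr_deriv ?_
    linear_combination (g t ^ 2) * inv_mul_cancel₀ hc
  have hvc : Continuous vper := continuous_iff_continuousAt.mpr fun t => (hder t).continuousAt
  refine ⟨fun t => ?_, hder, by fun_prop, fun t0 t _ => ?_⟩
  · simp only [hvper_eq, forwardVariance_add_period hαT hgper]
  · rw [hvper_eq, mul_left_comm, ← mul_sub, forwardVariance_add_period_sub hαc hg hαT hgper,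
      ← mul_assoc, inv_mul_cancel₀ hc, one_mul]

/-- Periodic solution of the forward variance equation (equations (fps4)–(fps6)). -/
theorem periodic_forward_variance
    (T : ℝ) (hT : 0 < T) (a g : ℝ → ℝ)
    (ha : Continuous a) (hg : Continuous g)
    (haper : ∀ t, a (t + T) = a t) (hgper : ∀ t, g (t + T) = g t)
    (a0 g0 : ℝ) (ha0 : 0 < a0) (hg0 : 0 < g0)
    (halb : ∀ t, a0 ≤ a t) (hglb : ∀ t, g0 ≤ g t)
    (α : ℝ → ℝ) (hα : ∀ t, α t = ∫ u in (0:ℝ)..t, a u)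
    (lam : ℝ) (hlam : lam = α T / T)
    (vper : ℝ → ℝ)
    (hvper : ∀ t, vper t = (1 - Real.exp (-2 * lam * T))⁻¹ *
      ∫ s in t..t + T, Real.exp (-2 * (α (t + T) - α s)) * g s ^ 2)
    (vm : ℝ → ℝ → ℝ)
    (hvm : ∀ t t0, vm t t0 = ∫ s in t0..t, Real.exp (-2 * (α t - α s)) * g s ^ 2) :
    (∀ t, vper (t + T) = vper t)
    ∧ (∀ t, HasDerivAt vper (-2 * a t * vper t + g t ^ 2) t)
    ∧ Continuous (fun t => -2 * a t * vper t + g t ^ 2)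
    ∧ (∀ t0 t, t0 ≤ t →
        vm t t0 = vper t - Real.exp (-2 * (α t - α t0)) * vper t0) :=
  periodic_forward_variance_general T hT a g ha hg haper hgper a0 ha0 halb α hα lam hlam vper hvper
    vm hvm
end

section
/- Periodic solution of the backward variance equation (equations (fpu5)–(fpu7)). The function v̂per₊ is T-periodic, continuously differentiable, and satisfies the differential equation v̂per₊′(s) = 2a(s) v̂per₊(s) − g(s)² for all s. Moreover, for all t ≥ s one has the relation v̂₊(t,s) = v̂per₊(s) − e^{−2α(t,s)} v̂per₊(t). -/
/-!
With `E = exp (2 α)` and the density `h = exp (-2 α) g²`, the integrand of `v̂per₊(t)` is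
`exp (2 α T) E(t) h(s)`, so `v̂per₊ = C · E · F` with `F(t) = ∫_t^{t+T} h` and
`C = e^{2λT} / (e^{2λT} - 1)`, while `v̂₊(t,s) = E(s) ∫_s^t h`. Periodicity of `a` and `g`
makes `h` quasi-periodic, `h(u + T) = e^{-2λT} h(u)`, hence
`F(s) - F(t) = (1 - e^{-2λT}) ∫_s^t h`. Since `C (1 - e^{-2λT}) = 1`, this one identity gives
the relation between `v̂₊` and `v̂per₊`, the periodicity `F(t + T) = e^{-2λT} F(t)`, and
`F' = (e^{-2λT} - 1) h`, from which the differential equation follows.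
-/

open MeasureTheory intervalIntegral Real

section QuasiPeriodic

variable {h : ℝ → ℝ} {T q : ℝ}

theorem integral_period_sub_integral_period_of_quasiPeriodic (hh : Continuous h)
    (hq : ∀ u, h (u + T) = q * h u) (s t : ℝ) :
    (∫ u in s..s + T, h u) - ∫ u in t..t + T, h u = (1 - q) * ∫ u in s..t, h u := by
  rw [integral_interval_sub_interval_comm (hh.intervalIntegrable _ _) (hh.intervalIntegrable _ _)
    (hh.intervalIntegrable _ _), ← integral_comp_add_right]
  simp only [hq, intervalIntegral.integral_const_mul]
  ring

theorem integral_period_add_period_of_quasiPeriodic (hh : Continuous h)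
    (hq : ∀ u, h (u + T) = q * h u) (t : ℝ) :
    ∫ u in t + T..t + T + T, h u = q * ∫ u in t..t + T, h u := by
  linarith [integral_period_sub_integral_period_of_quasiPeriodic hh hq t (t + T)]

theorem hasDerivAt_integral_period_of_quasiPeriodic (hh : Continuous h)
    (hq : ∀ u, h (u + T) = q * h u) (t : ℝ) :
    HasDerivAt (fun t => ∫ u in t..t + T, h u) ((q - 1) * h t) t := by
  have hF : (fun t => ∫ u in t..t + T, h u)
      = fun t => (∫ u in (0 : ℝ)..0 + T, h u) + (q - 1) * ∫ u in (0 : ℝ)..t, h u := by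
    funext t
    linarith [integral_period_sub_integral_period_of_quasiPeriodic hh hq 0 t]
  rw [hF]
  exact ((hh.integral_hasStrictDerivAt 0 t).hasDerivAt.const_mul _).const_add _

end QuasiPeriodic

noncomputable def periodicBackwardVariance (α g : ℝ → ℝ) (T t : ℝ) : ℝ :=
  (exp (2 * α T) - 1)⁻¹ * ∫ s in t..t + T, exp (2 * (α (t + T) - α s)) * g s ^ 2

noncomputable def backwardVariance (α g : ℝ → ℝ) (t s : ℝ) : ℝ :=
  ∫ u in s..t, exp (-2 * (α u - α s)) * g u ^ 2

noncomputable def varianceDensity (α g : ℝ → ℝ) (u : ℝ) : ℝ :=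
  exp (-2 * α u) * g u ^ 2

section BackwardVariance

variable {α a g : ℝ → ℝ} {T : ℝ}

theorem backwardVariance_eq (t s : ℝ) :
    backwardVariance α g t s = exp (2 * α s) * ∫ u in s..t, varianceDensity α g u := by
  rw [backwardVariance, ← intervalIntegral.integral_const_mul]
  congr 1 with u
  rw [varianceDensity, ← mul_assoc, ← exp_add]
  ring_nf

theorem periodicBackwardVariance_eq (hαT : ∀ t, α (t + T) = α t + α T) (t : ℝ) :
    periodicBackwardVariance α g T t = exp (2 * α T) / (exp (2 * α T) - 1) *
      (exp (2 * α t) * ∫ s in t..t + T, varianceDensity α g s) := by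
  rw [periodicBackwardVariance, ← intervalIntegral.integral_const_mul,
    ← intervalIntegral.integral_const_mul, ← intervalIntegral.integral_const_mul]
  congr 1 with s
  rw [varianceDensity, hαT,
    show 2 * (α t + α T - α s) = 2 * α T + 2 * α t + -2 * α s by ring, exp_add, exp_add]
  ring

theorem varianceDensity_add_period (hαT : ∀ t, α (t + T) = α t + α T)
    (hgT : Function.Periodic g T) (u : ℝ) :
    varianceDensity α g (u + T) = exp (-2 * α T) * varianceDensity α g u := by
  rw [varianceDensity, varianceDensity, hαT, hgT, ← mul_assoc, ← exp_add]
  ring_nf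

theorem continuous_varianceDensity (hα : Continuous α) (hg : Continuous g) :
    Continuous (varianceDensity α g) := by
  unfold varianceDensity
  fun_prop

theorem exp_two_mul_mul_exp_neg_two_mul (x : ℝ) : exp (2 * x) * exp (-2 * x) = 1 := by
  rw [← exp_add]
  ring_nf
  exact exp_zero

theorem exp_div_exp_sub_one_mul_one_sub_exp_neg {x : ℝ} (hx : x ≠ 0) :
    exp (2 * x) / (exp (2 * x) - 1) * (1 - exp (-2 * x)) = 1 := by
  have hne : exp (2 * x) - 1 ≠ 0 := by
    rw [sub_ne_zero, Ne, exp_eq_one_iff]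
    simpa using hx
  rw [div_mul_eq_mul_div, mul_one_sub, exp_two_mul_mul_exp_neg_two_mul, div_self hne]

theorem periodicBackwardVariance_periodic (hα : Continuous α) (hg : Continuous g)
    (hαT : ∀ t, α (t + T) = α t + α T) (hgT : Function.Periodic g T) :
    Function.Periodic (periodicBackwardVariance α g T) T := by
  intro t
  rw [periodicBackwardVariance_eq hαT, periodicBackwardVariance_eq hαT, hαT t,
    integral_period_add_period_of_quasiPeriodic (continuous_varianceDensity hα hg)
      (varianceDensity_add_period hαT hgT), mul_add, exp_add]
  linear_combination (exp (2 * α T) / (exp (2 * α T) - 1) * exp (2 * α t) *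
    ∫ s in t..t + T, varianceDensity α g s) * exp_two_mul_mul_exp_neg_two_mul (α T)

theorem hasDerivAt_periodicBackwardVariance (hα : ∀ t, HasDerivAt α (a t) t)
    (hg : Continuous g) (hαT : ∀ t, α (t + T) = α t + α T) (hgT : Function.Periodic g T)
    (hαT₀ : α T ≠ 0) (t : ℝ) :
    HasDerivAt (periodicBackwardVariance α g T)
      (2 * a t * periodicBackwardVariance α g T t - g t ^ 2) t := by
  set C := exp (2 * α T) / (exp (2 * α T) - 1)
  have hP : periodicBackwardVariance α g T =
      fun t => C * (exp (2 * α t) * ∫ s in t..t + T, varianceDensity α g s) :=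
    funext (periodicBackwardVariance_eq hαT)
  have hαc : Continuous α := continuous_iff_continuousAt.2 fun t => (hα t).continuousAt
  have hF := hasDerivAt_integral_period_of_quasiPeriodic (continuous_varianceDensity hαc hg)
    (varianceDensity_add_period hαT hgT) t
  have hE := ((hα t).const_mul 2).exp
  rw [hP]
  refine ((hE.mul hF).const_mul C).congr_deriv ?_
  rw [varianceDensity]
  linear_combination (-(g t ^ 2)) * exp_div_exp_sub_one_mul_one_sub_exp_neg hαT₀
    + C * (exp (-2 * α T) - 1) * g t ^ 2 * exp_two_mul_mul_exp_neg_two_mul (α t)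

theorem backwardVariance_eq_sub (hα : Continuous α) (hg : Continuous g)
    (hαT : ∀ t, α (t + T) = α t + α T) (hgT : Function.Periodic g T) (hαT₀ : α T ≠ 0)
    (s t : ℝ) :
    backwardVariance α g t s = periodicBackwardVariance α g T s
      - exp (-2 * (α t - α s)) * periodicBackwardVariance α g T t := by
  have hdiff := integral_period_sub_integral_period_of_quasiPeriodic
    (continuous_varianceDensity hα hg) (varianceDensity_add_period hαT hgT) s t
  have hE : exp (-2 * (α t - α s)) * exp (2 * α t) = exp (2 * α s) := by
    rw [← exp_add]
    ring_nf
  rw [backwardVariance_eq, periodicBackwardVariance_eq hαT, periodicBackwardVariance_eq hαT]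
  linear_combination -(exp (2 * α s) * ∫ u in s..t, varianceDensity α g u) *
      exp_div_exp_sub_one_mul_one_sub_exp_neg hαT₀
    - exp (2 * α T) / (exp (2 * α T) - 1) * exp (2 * α s) * hdiff
    + exp (2 * α T) / (exp (2 * α T) - 1) * (∫ u in t..t + T, varianceDensity α g u) * hE

end BackwardVariance

theorem periodic_backward_variance_general
    (T : ℝ) (hT : 0 < T) (a g : ℝ → ℝ)
    (ha : Continuous a) (hg : Continuous g)
    (haper : ∀ t, a (t + T) = a t) (hgper : ∀ t, g (t + T) = g t)
    (a0 : ℝ) (ha0 : 0 < a0)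
    (halb : ∀ t, a0 ≤ a t)
    (α : ℝ → ℝ) (hα : ∀ t, α t = ∫ u in (0:ℝ)..t, a u)
    (lam : ℝ) (hlam : lam = α T / T)
    (vhatper : ℝ → ℝ)
    (hvhatper : ∀ t, vhatper t = (Real.exp (2 * lam * T) - 1)⁻¹ *
      ∫ s in t..t + T, Real.exp (2 * (α (t + T) - α s)) * g s ^ 2)
    (vhat : ℝ → ℝ → ℝ)
    (hvhat : ∀ t s, vhat t s = ∫ u in s..t, Real.exp (-2 * (α u - α s)) * g u ^ 2) :
    (∀ s, vhatper (s + T) = vhatper s)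
    ∧ (∀ s, HasDerivAt vhatper (2 * a s * vhatper s - g s ^ 2) s)
    ∧ Continuous (fun s => 2 * a s * vhatper s - g s ^ 2)
    ∧ (∀ s t, s ≤ t →
        vhat t s = vhatper s - Real.exp (-2 * (α t - α s)) * vhatper t) := by
  have hαd : ∀ t, HasDerivAt α (a t) t := fun t => by
    rw [show α = fun t => ∫ u in (0:ℝ)..t, a u from funext hα]
    exact (ha.integral_hasStrictDerivAt 0 t).hasDerivAt
  have hαT : ∀ t, α (t + T) = α t + α T := fun t => by
    simpa only [hα, zero_add] using Function.Periodic.intervalIntegral_add_eq_add haper 0 t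
      fun _ _ => ha.intervalIntegrable _ _
  have hαT₀ : α T ≠ 0 := by
    rw [hα]
    exact (intervalIntegral_pos_of_pos (ha.intervalIntegrable _ _)
      (fun t => ha0.trans_le (halb t)) hT).ne'
  have hαc : Continuous α := continuous_iff_continuousAt.2 fun t => (hαd t).continuousAt
  obtain rfl : vhatper = periodicBackwardVariance α g T := by
    funext t
    rw [hvhatper, hlam, mul_assoc, div_mul_cancel₀ _ hT.ne', periodicBackwardVariance]
  obtain rfl : vhat = backwardVariance α g := funext₂ hvhat
  have hderiv := hasDerivAt_periodicBackwardVariance hαd hg hαT hgper hαT₀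
  refine ⟨periodicBackwardVariance_periodic hαc hg hαT hgper, hderiv, ?_,
    fun s t _ => backwardVariance_eq_sub hαc hg hαT hgper hαT₀ s t⟩
  have := continuous_iff_continuousAt.2 fun t => (hderiv t).continuousAt
  fun_prop

/-- Periodic solution of the backward variance equation (equations (fpu5)–(fpu7)). -/
theorem periodic_backward_variance
    (T : ℝ) (hT : 0 < T) (a g : ℝ → ℝ)
    (ha : Continuous a) (hg : Continuous g)
    (haper : ∀ t, a (t + T) = a t) (hgper : ∀ t, g (t + T) = g t)
    (a0 g0 : ℝ) (ha0 : 0 < a0) (hg0 : 0 < g0)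
    (halb : ∀ t, a0 ≤ a t) (hglb : ∀ t, g0 ≤ g t)
    (α : ℝ → ℝ) (hα : ∀ t, α t = ∫ u in (0:ℝ)..t, a u)
    (lam : ℝ) (hlam : lam = α T / T)
    (vhatper : ℝ → ℝ)
    (hvhatper : ∀ t, vhatper t = (Real.exp (2 * lam * T) - 1)⁻¹ *
      ∫ s in t..t + T, Real.exp (2 * (α (t + T) - α s)) * g s ^ 2)
    (vhat : ℝ → ℝ → ℝ)
    (hvhat : ∀ t s, vhat t s = ∫ u in s..t, Real.exp (-2 * (α u - α s)) * g u ^ 2) :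
    (∀ s, vhatper (s + T) = vhatper s)
    ∧ (∀ s, HasDerivAt vhatper (2 * a s * vhatper s - g s ^ 2) s)
    ∧ Continuous (fun s => 2 * a s * vhatper s - g s ^ 2)
    ∧ (∀ s t, s ≤ t →
        vhat t s = vhatper s - Real.exp (-2 * (α t - α s)) * vhatper t) :=
  periodic_backward_variance_general T hT a g ha hg haper hgper a0 ha0 halb α hα lam hlam vhatper
    hvhatper vhat hvhat
end

section
/- The periodic variances lie between the extremes of the instantaneous equilibrium variance (Section 2.3). For every t ∈ ℝ one has v̲ ≤ vper₋(t) ≤ v̄ and v̲ ≤ v̂per₊(t) ≤ v̄, where v̄ = max_{[0,T]} v* and v̲ = min_{[0,T]} v*. -/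
open MeasureTheory intervalIntegral

/-- The periodic variances lie between the extremes of the instantaneous
equilibrium variance (Section 2.3). -/
theorem periodic_variances_between_extremes
    (T : ℝ) (hT : 0 < T) (a g : ℝ → ℝ)
    (ha : Continuous a) (hg : Continuous g)
    (haper : ∀ t, a (t + T) = a t) (hgper : ∀ t, g (t + T) = g t)
    (a0 g0 : ℝ) (ha0 : 0 < a0) (hg0 : 0 < g0)
    (halb : ∀ t, a0 ≤ a t) (hglb : ∀ t, g0 ≤ g t)
    (α : ℝ → ℝ) (hα : ∀ t, α t = ∫ u in (0:ℝ)..t, a u)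
    (lam : ℝ) (hlam : lam = α T / T)
    (vstar : ℝ → ℝ) (hvstar : ∀ t, vstar t = g t ^ 2 / (2 * a t))
    (vbar vlow : ℝ)
    (hvbar : IsGreatest (vstar '' Set.Icc 0 T) vbar)
    (hvlow : IsLeast (vstar '' Set.Icc 0 T) vlow)
    (vper : ℝ → ℝ)
    (hvper : ∀ t, vper t = (1 - Real.exp (-2 * lam * T))⁻¹ *
      ∫ s in t..t + T, Real.exp (-2 * (α (t + T) - α s)) * g s ^ 2)
    (vhatper : ℝ → ℝ)
    (hvhatper : ∀ t, vhatper t = (Real.exp (2 * lam * T) - 1)⁻¹ *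
      ∫ s in t..t + T, Real.exp (2 * (α (t + T) - α s)) * g s ^ 2) :
    ∀ t : ℝ, (vlow ≤ vper t ∧ vper t ≤ vbar)
      ∧ (vlow ≤ vhatper t ∧ vhatper t ≤ vbar) := by
  have apos : ∀ s, 0 < a s := fun s => lt_of_lt_of_le ha0 (halb s)
  have hαfun : α = fun t => ∫ u in (0:ℝ)..t, a u := funext hα
  have hαd : ∀ x : ℝ, HasDerivAt α (a x) x := by
    intro x
    rw [hαfun]
    exact intervalIntegral.integral_hasDerivAt_right (ha.intervalIntegrable 0 x)
      (ha.stronglyMeasurableAtFilter _ _) ha.continuousAt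
  have hαc : Continuous α :=
    continuous_iff_continuousAt.mpr fun x => (hαd x).continuousAt
  -- shift identity for α
  have hshift : ∀ t : ℝ, α (t + T) - α t = α T := by
    intro t
    have h1 : α t + ∫ s in t..t + T, a s = α (t + T) := by
      rw [hα, hα]
      exact intervalIntegral.integral_add_adjacent_intervals
        (ha.intervalIntegrable 0 t) (ha.intervalIntegrable t (t + T))
    have hper : Function.Periodic a T := haper
    have h2 : ∫ s in t..t + T, a s = ∫ s in (0:ℝ)..0 + T, a s :=
      hper.intervalIntegral_add_eq t 0
    rw [zero_add] at h2
    rw [← hα T] at h2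
    linarith
  have hlamT : lam * T = α T := by rw [hlam]; field_simp
  have hαTpos : 0 < α T := by
    have h := intervalIntegral.integral_mono_on hT.le
      (intervalIntegrable_const : IntervalIntegrable (fun _ => a0) volume 0 T)
      (ha.intervalIntegrable 0 T) (fun x _ => halb x)
    rw [intervalIntegral.integral_const, smul_eq_mul] at h
    rw [hα]
    nlinarith
  have c₁pos : 0 < 1 - Real.exp (-2 * lam * T) := by
    have : Real.exp (-2 * lam * T) < 1 := Real.exp_lt_one_iff.mpr (by nlinarith)
    linarith
  have c₂pos : 0 < Real.exp (2 * lam * T) - 1 := by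
    have : (1:ℝ) < Real.exp (2 * lam * T) := by
      rw [← Real.exp_zero]
      exact Real.exp_lt_exp.mpr (by nlinarith)
    linarith
  -- bounds on vstar everywhere via periodicity
  have hvp : Function.Periodic vstar T := by
    intro x; rw [hvstar, hvstar, haper, hgper]
  have vbounds : ∀ s : ℝ, vlow ≤ vstar s ∧ vstar s ≤ vbar := by
    intro s
    obtain ⟨y, hy, hxy⟩ := hvp.exists_mem_Ico₀ hT s
    rw [hxy]
    have hmem : vstar y ∈ vstar '' Set.Icc 0 T := ⟨y, Set.Ico_subset_Icc_self hy, rfl⟩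
    exact ⟨hvlow.2 hmem, hvbar.2 hmem⟩
  have g2rel : ∀ s : ℝ, g s ^ 2 = vstar s * (2 * a s) := by
    intro s
    have hne : a s ≠ 0 := (apos s).ne'
    rw [hvstar]
    field_simp
  -- continuity facts
  have contE : ∀ c : ℝ, Continuous fun s => Real.exp (c * α s) :=
    fun c => Real.continuous_exp.comp (continuous_const.mul hαc)
  have contW : ∀ c : ℝ, Continuous fun s => Real.exp (c * α s) * (2 * a s) :=
    fun c => (contE c).mul (continuous_const.mul ha)
  have contG : ∀ c : ℝ, Continuous fun s => Real.exp (c * α s) * g s ^ 2 :=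
    fun c => (contE c).mul (hg.pow 2)
  -- FTC integrals
  have ftc : ∀ (c : ℝ) (t : ℝ), c ≠ 0 →
      ∫ s in t..t + T, Real.exp (c * α s) * (c * a s)
        = Real.exp (c * α (t + T)) - Real.exp (c * α t) := by
    intro c t hc
    exact intervalIntegral.integral_eq_sub_of_hasDerivAt
      (fun x _ => ((hαd x).const_mul c).exp)
      (((contE c).mul (continuous_const.mul ha)).intervalIntegrable _ _)
  intro t
  have httT : t ≤ t + T := by linarith
  set A := α (t + T) with hA
  -- weighted integral identities
  have ftc2 : ∫ s in t..t + T, Real.exp (2 * α s) * (2 * a s)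
      = Real.exp (2 * A) - Real.exp (2 * α t) := ftc 2 t two_ne_zero
  have ftcm2 : ∫ s in t..t + T, Real.exp (-2 * α s) * (2 * a s)
      = Real.exp (-2 * α t) - Real.exp (-2 * A) := by
    have h := ftc (-2) t (by norm_num)
    have : (∫ s in t..t + T, Real.exp (-2 * α s) * (-2 * a s))
        = - ∫ s in t..t + T, Real.exp (-2 * α s) * (2 * a s) := by
      rw [← intervalIntegral.integral_neg]
      apply intervalIntegral.integral_congr
      intro s _; ring
    rw [this] at h
    linarith
  -- generic comparison
  have cmp : ∀ (c : ℝ), (∀ s, vlow * (Real.exp (c * α s) * (2 * a s)) ≤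
        Real.exp (c * α s) * g s ^ 2 ∧
        Real.exp (c * α s) * g s ^ 2 ≤ vbar * (Real.exp (c * α s) * (2 * a s))) := by
    intro c s
    have h1 := (vbounds s).1
    have h2 := (vbounds s).2
    have h3 := apos s
    have h4 := Real.exp_pos (c * α s)
    have hw : (0:ℝ) ≤ Real.exp (c * α s) * (2 * a s) :=
      mul_nonneg (Real.exp_pos _).le (by linarith)
    rw [g2rel s]
    constructor
    · linarith [mul_le_mul_of_nonneg_right h1 hw]
    · linarith [mul_le_mul_of_nonneg_right h2 hw]
  have Jlb : ∀ c : ℝ, vlow * ∫ s in t..t + T, Real.exp (c * α s) * (2 * a s)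
      ≤ ∫ s in t..t + T, Real.exp (c * α s) * g s ^ 2 := by
    intro c
    rw [← intervalIntegral.integral_const_mul]
    exact intervalIntegral.integral_mono_on httT
      ((continuous_const.mul (contW c)).intervalIntegrable _ _)
      ((contG c).intervalIntegrable _ _) (fun x _ => (cmp c x).1)
  have Jub : ∀ c : ℝ, (∫ s in t..t + T, Real.exp (c * α s) * g s ^ 2)
      ≤ vbar * ∫ s in t..t + T, Real.exp (c * α s) * (2 * a s) := by
    intro c
    rw [← intervalIntegral.integral_const_mul]
    exact intervalIntegral.integral_mono_on httT
      ((contG c).intervalIntegrable _ _)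
      ((continuous_const.mul (contW c)).intervalIntegrable _ _) (fun x _ => (cmp c x).2)
  -- rewrite vper t
  have hvperI : vper t = (1 - Real.exp (-2 * lam * T))⁻¹ *
      (Real.exp (-2 * A) * ∫ s in t..t + T, Real.exp (2 * α s) * g s ^ 2) := by
    rw [hvper]
    rw [← hA]
    congr 1
    rw [← intervalIntegral.integral_const_mul]
    apply intervalIntegral.integral_congr
    intro s _
    show Real.exp (-2 * (A - α s)) * g s ^ 2 = Real.exp (-2 * A) * (Real.exp (2 * α s) * g s ^ 2)
    rw [show (-2:ℝ) * (A - α s) = -2 * A + 2 * α s by ring, Real.exp_add]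
    ring
  have hvhatI : vhatper t = (Real.exp (2 * lam * T) - 1)⁻¹ *
      (Real.exp (2 * A) * ∫ s in t..t + T, Real.exp (-2 * α s) * g s ^ 2) := by
    rw [hvhatper]
    rw [← hA]
    congr 1
    rw [← intervalIntegral.integral_const_mul]
    apply intervalIntegral.integral_congr
    intro s _
    show Real.exp (2 * (A - α s)) * g s ^ 2 = Real.exp (2 * A) * (Real.exp (-2 * α s) * g s ^ 2)
    rw [show (2:ℝ) * (A - α s) = 2 * A + -2 * α s by ring, Real.exp_add]
    ring
  -- key exponential identities
  have hid₁ : Real.exp (-2 * A) * (Real.exp (2 * A) - Real.exp (2 * α t))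
      = 1 - Real.exp (-2 * lam * T) := by
    rw [mul_sub, ← Real.exp_add, ← Real.exp_add]
    have e1 : -2 * A + 2 * A = 0 := by ring
    have e2 : -2 * A + 2 * α t = -2 * lam * T := by
      have h := hshift t; rw [← hA] at h; linarith
    rw [e1, e2, Real.exp_zero]
  have hid₂ : Real.exp (2 * A) * (Real.exp (-2 * α t) - Real.exp (-2 * A))
      = Real.exp (2 * lam * T) - 1 := by
    rw [mul_sub, ← Real.exp_add, ← Real.exp_add]
    have e1 : 2 * A + -2 * A = 0 := by ring
    have e2 : 2 * A + -2 * α t = 2 * lam * T := by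
      have h := hshift t; rw [← hA] at h; linarith
    rw [e1, e2, Real.exp_zero]
  have hem2A := Real.exp_pos (-2 * A)
  have he2A := Real.exp_pos (2 * A)
  refine ⟨⟨?_, ?_⟩, ⟨?_, ?_⟩⟩
  · rw [hvperI, le_inv_mul_iff₀ c₁pos, ← hid₁]
    have h := Jlb 2
    rw [ftc2] at h
    linarith [mul_le_mul_of_nonneg_left h hem2A.le]
  · rw [hvperI, inv_mul_le_iff₀ c₁pos, ← hid₁]
    have h := Jub 2
    rw [ftc2] at h
    linarith [mul_le_mul_of_nonneg_left h hem2A.le]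
  · rw [hvhatI, le_inv_mul_iff₀ c₂pos, ← hid₂]
    have h := Jlb (-2)
    rw [ftcm2] at h
    linarith [mul_le_mul_of_nonneg_left h he2A.le]
  · rw [hvhatI, inv_mul_le_iff₀ c₂pos, ← hid₂]
    have h := Jub (-2)
    rw [ftcm2] at h
    linarith [mul_le_mul_of_nonneg_left h he2A.le]
end

section
/- Comparison of forward and backward variances (equations (fpK12:3) and (fpK12:4)). For all v ≤ u, setting ξ = e^{−α(u,v)} ∈ (0,1], one has v₋(u,v) ≤ ξ^{−2} v̂₊(u,v), and moreover v₋(u,v)/v̄ ≤ 1 − ξ² ≤ v̂₊(u,v)/v̲, where v̄ = max_{[0,T]} v* and v̲ = min_{[0,T]} v*. -/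
/-! Both inequalities against the extremal values of `v* = g² / (2a)` come from the fact that
`2a(s) e^{-2α(u,s)}` and `2a(s) e^{-2α(s,v)}` are exact derivatives whose integrals over `[v, u]`
both equal `1 - ξ²`; by periodicity `v̲ ≤ v* ≤ v̄` everywhere, so bounding `g²` by `2 v̄ a`
resp. `2 v̲ a` pointwise gives the sandwich.
The comparison `v₋ ≤ ξ⁻² v̂₊` is pointwise: `ξ⁻² e^{-2α(s,v)} = e^{2α(u,s)} ≥ e^{-2α(u,s)}`
because `α` is nondecreasing. -/

open MeasureTheory intervalIntegral Real

theorem integral_exp_comp_mul_deriv {φ φ' : ℝ → ℝ} (hφ : ∀ x, HasDerivAt φ (φ' x) x)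
    (hφ' : Continuous φ') (v u : ℝ) :
    ∫ x in v..u, exp (φ x) * φ' x = exp (φ u) - exp (φ v) := by
  simpa using integral_comp_mul_deriv (fun x _ => hφ x) hφ'.continuousOn continuous_exp

section

variable {a α f : ℝ → ℝ} {v u : ℝ}

theorem exp_neg_sq (x : ℝ) : exp (-x) ^ 2 = exp (-2 * x) := by
  rw [← exp_nat_mul]; ring_nf

theorem integral_exp_forward_mul_two_mul (hα : ∀ t, HasDerivAt α (a t) t) (ha : Continuous a) :
    ∫ s in v..u, exp (-2 * (α u - α s)) * (2 * a s) = 1 - exp (-(α u - α v)) ^ 2 := by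
  have hφ (s : ℝ) : HasDerivAt (fun s => -2 * (α u - α s)) (2 * a s) s := by
    simpa using ((hα s).const_sub (α u)).const_mul (-2)
  rw [integral_exp_comp_mul_deriv hφ (continuous_const.mul ha), exp_neg_sq]
  simp

theorem integral_exp_backward_mul_two_mul (hα : ∀ t, HasDerivAt α (a t) t) (ha : Continuous a) :
    ∫ s in v..u, exp (-2 * (α s - α v)) * (2 * a s) = 1 - exp (-(α u - α v)) ^ 2 := by
  have hφ (s : ℝ) : HasDerivAt (fun s => -2 * (α s - α v)) (-(2 * a s)) s := by
    simpa using ((hα s).sub_const (α v)).const_mul (-2)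
  have := integral_exp_comp_mul_deriv hφ (continuous_const.mul ha).neg v u
  simp only [mul_neg, intervalIntegral.integral_neg, sub_self, mul_zero, exp_zero] at this
  rw [exp_neg_sq]
  linarith

theorem integral_exp_forward_mul_le (hα : ∀ t, HasDerivAt α (a t) t) (ha : Continuous a)
    (hf : Continuous f) (hvu : v ≤ u) {M : ℝ} (hfM : ∀ s ∈ Set.Icc v u, f s ≤ M * (2 * a s)) :
    ∫ s in v..u, exp (-2 * (α u - α s)) * f s ≤ M * (1 - exp (-(α u - α v)) ^ 2) := by
  have hαc : Continuous α := continuous_iff_continuousAt.2 fun t => (hα t).continuousAt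
  rw [← integral_exp_forward_mul_two_mul hα ha, ← intervalIntegral.integral_const_mul]
  refine integral_mono_on hvu ((by fun_prop : Continuous _).intervalIntegrable _ _)
    ((by fun_prop : Continuous _).intervalIntegrable _ _) fun s hs => ?_
  calc exp (-2 * (α u - α s)) * f s ≤ exp (-2 * (α u - α s)) * (M * (2 * a s)) :=
        mul_le_mul_of_nonneg_left (hfM s hs) (exp_pos _).le
    _ = M * (exp (-2 * (α u - α s)) * (2 * a s)) := by ring

theorem le_integral_exp_backward_mul (hα : ∀ t, HasDerivAt α (a t) t) (ha : Continuous a)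
    (hf : Continuous f) (hvu : v ≤ u) {m : ℝ} (hfm : ∀ s ∈ Set.Icc v u, m * (2 * a s) ≤ f s) :
    m * (1 - exp (-(α u - α v)) ^ 2) ≤ ∫ s in v..u, exp (-2 * (α s - α v)) * f s := by
  have hαc : Continuous α := continuous_iff_continuousAt.2 fun t => (hα t).continuousAt
  rw [← integral_exp_backward_mul_two_mul hα ha, ← intervalIntegral.integral_const_mul]
  refine integral_mono_on hvu ((by fun_prop : Continuous _).intervalIntegrable _ _)
    ((by fun_prop : Continuous _).intervalIntegrable _ _) fun s hs => ?_
  calc m * (exp (-2 * (α s - α v)) * (2 * a s)) = exp (-2 * (α s - α v)) * (m * (2 * a s)) := by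
        ring
    _ ≤ exp (-2 * (α s - α v)) * f s := mul_le_mul_of_nonneg_left (hfm s hs) (exp_pos _).le

theorem integral_exp_forward_le_mul_integral_exp_backward (hα : Monotone α)
    (hαc : Continuous α) (hf : Continuous f) (hvu : v ≤ u) (hf0 : ∀ s ∈ Set.Icc v u, 0 ≤ f s) :
    ∫ s in v..u, exp (-2 * (α u - α s)) * f s
      ≤ (exp (-(α u - α v)))⁻¹ ^ 2 * ∫ s in v..u, exp (-2 * (α s - α v)) * f s := by
  rw [← intervalIntegral.integral_const_mul]
  refine integral_mono_on hvu ((by fun_prop : Continuous _).intervalIntegrable _ _)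
    ((by fun_prop : Continuous _).intervalIntegrable _ _) fun s hs => ?_
  have hweight : (exp (-(α u - α v)))⁻¹ ^ 2 * exp (-2 * (α s - α v)) = exp (2 * (α u - α s)) := by
    rw [← exp_neg, ← exp_nat_mul, ← exp_add]
    ring_nf
  calc exp (-2 * (α u - α s)) * f s ≤ exp (2 * (α u - α s)) * f s :=
        mul_le_mul_of_nonneg_right (exp_le_exp.2 (by linarith [hα hs.2])) (hf0 s hs)
    _ = (exp (-(α u - α v)))⁻¹ ^ 2 * (exp (-2 * (α s - α v)) * f s) := by
        rw [← mul_assoc, hweight]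

end

/-- Comparison of forward and backward variances
(equations (fpK12:3) and (fpK12:4)). -/
theorem forward_backward_variance_comparison
    (T : ℝ) (hT : 0 < T) (a g : ℝ → ℝ)
    (ha : Continuous a) (hg : Continuous g)
    (haper : ∀ t, a (t + T) = a t) (hgper : ∀ t, g (t + T) = g t)
    (a0 g0 : ℝ) (ha0 : 0 < a0) (hg0 : 0 < g0)
    (halb : ∀ t, a0 ≤ a t) (hglb : ∀ t, g0 ≤ g t)
    (α : ℝ → ℝ) (hα : ∀ t, α t = ∫ u in (0:ℝ)..t, a u)
    (vstar : ℝ → ℝ) (hvstar : ∀ t, vstar t = g t ^ 2 / (2 * a t))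
    (vbar vlow : ℝ)
    (hvbar : IsGreatest (vstar '' Set.Icc 0 T) vbar)
    (hvlow : IsLeast (vstar '' Set.Icc 0 T) vlow)
    (vm : ℝ → ℝ → ℝ)
    (hvm : ∀ u v, vm u v = ∫ s in v..u, Real.exp (-2 * (α u - α s)) * g s ^ 2)
    (vhat : ℝ → ℝ → ℝ)
    (hvhat : ∀ u v, vhat u v = ∫ s in v..u, Real.exp (-2 * (α s - α v)) * g s ^ 2) :
    ∀ v u : ℝ, v ≤ u →
      (0 < Real.exp (-(α u - α v)) ∧ Real.exp (-(α u - α v)) ≤ 1)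
      ∧ vm u v ≤ (Real.exp (-(α u - α v)))⁻¹ ^ 2 * vhat u v
      ∧ vm u v / vbar ≤ 1 - (Real.exp (-(α u - α v))) ^ 2
      ∧ 1 - (Real.exp (-(α u - α v))) ^ 2 ≤ vhat u v / vlow := by
  have hapos (t : ℝ) : 0 < 2 * a t := mul_pos two_pos (ha0.trans_le (halb t))
  have hα' (t : ℝ) : HasDerivAt α (a t) t := by
    rw [show α = _ from funext hα]
    exact (ha.integral_hasStrictDerivAt 0 t).hasDerivAt
  have hαd : Differentiable ℝ α := fun t => (hα' t).differentiableAt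
  have hmono : Monotone α :=
    monotone_of_deriv_nonneg hαd fun t => (hα' t).deriv ▸ (ha0.trans_le (halb t)).le
  have hper : Function.Periodic vstar T := fun t => by simp only [hvstar, haper, hgper]
  have hrange : vstar '' Set.Icc 0 T = Set.range vstar := by simpa using hper.image_Icc hT 0
  rw [hrange] at hvbar hvlow
  have hupper (s : ℝ) : g s ^ 2 ≤ vbar * (2 * a s) := by
    simpa only [hvstar, div_le_iff₀ (hapos s)] using hvbar.2 (Set.mem_range_self s)
  have hlower (s : ℝ) : vlow * (2 * a s) ≤ g s ^ 2 := by
    simpa only [hvstar, le_div_iff₀ (hapos s)] using hvlow.2 (Set.mem_range_self s)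
  have hvlow_pos : 0 < vlow := by
    obtain ⟨t, rfl⟩ := hvlow.1
    rw [hvstar]
    exact div_pos (pow_pos (hg0.trans_le (hglb t)) 2) (hapos t)
  have hvbar_pos : 0 < vbar := hvlow_pos.trans_le (hvlow.2 hvbar.1)
  intro v u hvu
  rw [hvm, hvhat]
  refine ⟨⟨exp_pos _, exp_le_one_iff.2 (by linarith [hmono hvu])⟩,
    integral_exp_forward_le_mul_integral_exp_backward hmono hαd.continuous (by fun_prop) hvu
      fun s _ => sq_nonneg _, ?_, ?_⟩
  · rw [div_le_iff₀ hvbar_pos, mul_comm]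
    exact integral_exp_forward_mul_le hα' ha (by fun_prop) hvu fun s _ => hupper s
  · rw [le_div_iff₀ hvlow_pos, mul_comm]
    exact le_integral_exp_backward_mul hα' ha (by fun_prop) hvu fun s _ => hlower s
end

section
/- Domination of the exponential rates under Hypothesis H4 (equation (fpK12:2)). Assume 0 < δ₁ < δ₂ < 1 and δ₂/(2−δ₂) ≤ √(v̲/v̄), where v̄ = max_{[0,T]} v* and v̲ = min_{[0,T]} v*. Define ρ↑(u,v)² = ((2−δ₁) − (2−δ₂) e^{−α(u,v)})² / v₋(u,v) and ρ↑⁺(u,v)² = (δ₂ − δ₁ e^{−α(u,v)})² / v̂₊(u,v). Then for all u > v one has ρ↑(u,v)² ≥ ρ↑⁺(u,v)². -/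
open MeasureTheory intervalIntegral

set_option maxHeartbeats 1000000 in
/-- Domination of the exponential rates under Hypothesis H4 (equation (fpK12:2)). -/
theorem rate_domination_H4
    (T : ℝ) (hT : 0 < T) (a g : ℝ → ℝ)
    (ha : Continuous a) (hg : Continuous g)
    (haper : ∀ t, a (t + T) = a t) (hgper : ∀ t, g (t + T) = g t)
    (a0 g0 : ℝ) (ha0 : 0 < a0) (hg0 : 0 < g0)
    (halb : ∀ t, a0 ≤ a t) (hglb : ∀ t, g0 ≤ g t)
    (α : ℝ → ℝ) (hα : ∀ t, α t = ∫ u in (0:ℝ)..t, a u)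
    (vstar : ℝ → ℝ) (hvstar : ∀ t, vstar t = g t ^ 2 / (2 * a t))
    (vbar vlow : ℝ)
    (hvbar : IsGreatest (vstar '' Set.Icc 0 T) vbar)
    (hvlow : IsLeast (vstar '' Set.Icc 0 T) vlow)
    (vm : ℝ → ℝ → ℝ)
    (hvm : ∀ u v, vm u v = ∫ s in v..u, Real.exp (-2 * (α u - α s)) * g s ^ 2)
    (vhat : ℝ → ℝ → ℝ)
    (hvhat : ∀ u v, vhat u v = ∫ s in v..u, Real.exp (-2 * (α s - α v)) * g s ^ 2)
    (δ₁ δ₂ : ℝ) (hδ₁ : 0 < δ₁) (hδ₁₂ : δ₁ < δ₂) (hδ₂ : δ₂ < 1)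
    (hH4 : δ₂ / (2 - δ₂) ≤ Real.sqrt (vlow / vbar)) :
    ∀ u v : ℝ, v < u →
      (δ₂ - δ₁ * Real.exp (-(α u - α v))) ^ 2 / vhat u v
        ≤ ((2 - δ₁) - (2 - δ₂) * Real.exp (-(α u - α v))) ^ 2 / vm u v := by
  intro u v huv
  have hvu : v ≤ u := le_of_lt huv
  have hapos : ∀ t, 0 < a t := fun t => lt_of_lt_of_le ha0 (halb t)
  have hgpos : ∀ t, 0 < g t := fun t => lt_of_lt_of_le hg0 (hglb t)
  -- α is differentiable with derivative a
  have hαd : ∀ s : ℝ, HasDerivAt α (a s) s := by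
    intro s
    have h1 : HasDerivAt (fun t => ∫ x in (0:ℝ)..t, a x) (a s) s :=
      intervalIntegral.integral_hasDerivAt_right (ha.intervalIntegrable _ _)
        (ha.stronglyMeasurableAtFilter _ _) ha.continuousAt
    have hfe : α = fun t => ∫ x in (0:ℝ)..t, a x := funext hα
    rw [hfe]; exact h1
  have hαc : Continuous α := by
    rw [continuous_iff_continuousAt]
    exact fun s => (hαd s).continuousAt
  -- α is monotone, and α u - α v > 0
  have hαsub : ∀ s t : ℝ, α t - α s = ∫ x in s..t, a x := by
    intro s t
    rw [hα, hα]
    exact intervalIntegral.integral_interval_sub_left (ha.intervalIntegrable _ _)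
      (ha.intervalIntegrable _ _)
  have hαmono : ∀ s t : ℝ, s ≤ t → α s ≤ α t := by
    intro s t hst
    have h0 : (0:ℝ) ≤ α t - α s := by
      rw [hαsub]
      exact intervalIntegral.integral_nonneg hst (fun x _ => le_of_lt (hapos x))
    linarith
  have hβ : 0 < α u - α v := by
    rw [hαsub]
    have huv' : 0 < u - v := by linarith
    calc (0:ℝ) < a0 * (u - v) := by positivity
      _ = ∫ _x in v..u, a0 := by rw [intervalIntegral.integral_const, smul_eq_mul]; ring
      _ ≤ ∫ x in v..u, a x :=
        intervalIntegral.integral_mono_on hvu (intervalIntegrable_const)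
          (ha.intervalIntegrable _ _) (fun x _ => halb x)
  set E := Real.exp (-(α u - α v)) with hE
  have hE0 : 0 < E := Real.exp_pos _
  have hE1 : E < 1 := Real.exp_lt_one_iff.2 (by linarith)
  have hE2 : E ^ 2 = Real.exp (-2 * (α u - α v)) := by
    rw [hE, sq, ← Real.exp_add]; ring_nf
  -- vstar is periodic, hence globally bounded by vlow and vbar
  have hvsp : Function.Periodic vstar T := by
    intro t; rw [hvstar, hvstar, haper, hgper]
  have hvub : ∀ t, vstar t ≤ vbar := by
    intro t
    obtain ⟨y, hy, hEq⟩ := hvsp.exists_mem_Ico₀ hT t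
    rw [hEq]
    exact hvbar.2 (Set.mem_image_of_mem _ (Set.Ico_subset_Icc_self hy))
  have hvlb : ∀ t, vlow ≤ vstar t := by
    intro t
    obtain ⟨y, hy, hEq⟩ := hvsp.exists_mem_Ico₀ hT t
    rw [hEq]
    exact hvlow.2 (Set.mem_image_of_mem _ (Set.Ico_subset_Icc_self hy))
  have hvspos : ∀ t, 0 < vstar t := by
    intro t; rw [hvstar]
    have := hapos t; have := hgpos t
    positivity
  have hvlow0 : 0 < vlow := by
    obtain ⟨t0, _, h⟩ := hvlow.1
    rw [← h]; exact hvspos t0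
  have hvbar0 : 0 < vbar := lt_of_lt_of_le hvlow0 (hvlow.2 hvbar.1)
  -- g² in terms of vstar
  have hg2 : ∀ s, g s ^ 2 = vstar s * (2 * a s) := by
    intro s
    rw [hvstar]
    field_simp [ne_of_gt (hapos s)]
  -- continuity and integrability facts
  have hcm : Continuous fun s => Real.exp (-2 * (α u - α s)) :=
    Real.continuous_exp.comp (continuous_const.mul (continuous_const.sub hαc))
  have hch : Continuous fun s => Real.exp (-2 * (α s - α v)) :=
    Real.continuous_exp.comp (continuous_const.mul (hαc.sub continuous_const))
  have hiam : IntervalIntegrable (fun s => 2 * a s * Real.exp (-2 * (α u - α s))) volume v u :=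
    ((continuous_const.mul ha).mul hcm).intervalIntegrable _ _
  have hiah : IntervalIntegrable (fun s => 2 * a s * Real.exp (-2 * (α s - α v))) volume v u :=
    ((continuous_const.mul ha).mul hch).intervalIntegrable _ _
  have higm : IntervalIntegrable (fun s => Real.exp (-2 * (α u - α s)) * g s ^ 2) volume v u :=
    (hcm.mul (hg.pow 2)).intervalIntegrable _ _
  have high : IntervalIntegrable (fun s => Real.exp (-2 * (α s - α v)) * g s ^ 2) volume v u :=
    (hch.mul (hg.pow 2)).intervalIntegrable _ _
  have hig : IntervalIntegrable (fun s => g s ^ 2) volume v u :=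
    ((hg.pow 2)).intervalIntegrable _ _
  -- FTC computations
  have key1 : (∫ s in v..u, 2 * a s * Real.exp (-2 * (α u - α s))) = 1 - E ^ 2 := by
    have hder : ∀ s ∈ Set.uIcc v u,
        HasDerivAt (fun s => Real.exp (-2 * (α u - α s)))
          (2 * a s * Real.exp (-2 * (α u - α s))) s := by
      intro s _
      have h1 : HasDerivAt (fun s => -2 * (α u - α s)) (2 * a s) s := by
        have := ((hαd s).const_sub (α u)).const_mul (-2 : ℝ)
        exact this.congr_deriv (by ring)
      exact h1.exp.congr_deriv (by ring)
    have heq := intervalIntegral.integral_eq_sub_of_hasDerivAt hder hiam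
    rw [heq, hE2]
    simp only [sub_self, mul_zero, Real.exp_zero]
  have key2 : (∫ s in v..u, 2 * a s * Real.exp (-2 * (α s - α v))) = 1 - E ^ 2 := by
    have hder : ∀ s ∈ Set.uIcc v u,
        HasDerivAt (fun s => -Real.exp (-2 * (α s - α v)))
          (2 * a s * Real.exp (-2 * (α s - α v))) s := by
      intro s _
      have h1 : HasDerivAt (fun s => -2 * (α s - α v)) (-2 * a s) s := by
        have := ((hαd s).sub_const (α v)).const_mul (-2 : ℝ)
        exact this.congr_deriv (by ring)
      exact h1.exp.neg.congr_deriv (by ring)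
    have heq := intervalIntegral.integral_eq_sub_of_hasDerivAt hder hiah
    rw [heq, hE2]
    simp only [sub_self, mul_zero, Real.exp_zero]
    ring_nf
  -- the five bounds
  set I := ∫ s in v..u, g s ^ 2 with hI
  have hI0 : 0 ≤ I :=
    intervalIntegral.integral_nonneg hvu (fun x _ => sq_nonneg _)
  have hB1 : vm u v ≤ vbar * (1 - E ^ 2) := by
    rw [hvm]
    calc (∫ s in v..u, Real.exp (-2 * (α u - α s)) * g s ^ 2)
        ≤ ∫ s in v..u, vbar * (2 * a s * Real.exp (-2 * (α u - α s))) := by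
          apply intervalIntegral.integral_mono_on hvu higm
            (hiam.const_mul vbar)
          intro s _
          rw [hg2 s]
          have h1 : Real.exp (-2 * (α u - α s)) * (vstar s * (2 * a s))
              = vstar s * (2 * a s * Real.exp (-2 * (α u - α s))) := by ring
          rw [h1]
          apply mul_le_mul_of_nonneg_right (hvub s)
          have := hapos s; have := Real.exp_pos (-2 * (α u - α s)); positivity
      _ = vbar * (1 - E ^ 2) := by rw [intervalIntegral.integral_const_mul, key1]
  have hB5 : vlow * (1 - E ^ 2) ≤ vm u v := by
    rw [hvm]
    calc vlow * (1 - E ^ 2)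
        = ∫ s in v..u, vlow * (2 * a s * Real.exp (-2 * (α u - α s))) := by
          rw [intervalIntegral.integral_const_mul, key1]
      _ ≤ ∫ s in v..u, Real.exp (-2 * (α u - α s)) * g s ^ 2 := by
          apply intervalIntegral.integral_mono_on hvu (hiam.const_mul vlow) higm
          intro s _
          rw [hg2 s]
          have h1 : Real.exp (-2 * (α u - α s)) * (vstar s * (2 * a s))
              = vstar s * (2 * a s * Real.exp (-2 * (α u - α s))) := by ring
          rw [h1]
          apply mul_le_mul_of_nonneg_right (hvlb s)
          have := hapos s; have := Real.exp_pos (-2 * (α u - α s)); positivity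
  have hB2 : vlow * (1 - E ^ 2) ≤ vhat u v := by
    rw [hvhat]
    calc vlow * (1 - E ^ 2)
        = ∫ s in v..u, vlow * (2 * a s * Real.exp (-2 * (α s - α v))) := by
          rw [intervalIntegral.integral_const_mul, key2]
      _ ≤ ∫ s in v..u, Real.exp (-2 * (α s - α v)) * g s ^ 2 := by
          apply intervalIntegral.integral_mono_on hvu (hiah.const_mul vlow) high
          intro s _
          rw [hg2 s]
          have h1 : Real.exp (-2 * (α s - α v)) * (vstar s * (2 * a s))
              = vstar s * (2 * a s * Real.exp (-2 * (α s - α v))) := by ring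
          rw [h1]
          apply mul_le_mul_of_nonneg_right (hvlb s)
          have := hapos s; have := Real.exp_pos (-2 * (α s - α v)); positivity
  have hB3 : vm u v ≤ I := by
    rw [hvm, hI]
    apply intervalIntegral.integral_mono_on hvu higm hig
    intro s hs
    have h1 : Real.exp (-2 * (α u - α s)) ≤ 1 := by
      apply Real.exp_le_one_iff.2
      have := hαmono s u hs.2
      linarith
    calc Real.exp (-2 * (α u - α s)) * g s ^ 2 ≤ 1 * g s ^ 2 :=
        mul_le_mul_of_nonneg_right h1 (sq_nonneg _)
      _ = g s ^ 2 := one_mul _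
  have hB4 : E ^ 2 * I ≤ vhat u v := by
    rw [hvhat, hI, ← intervalIntegral.integral_const_mul]
    apply intervalIntegral.integral_mono_on hvu (hig.const_mul (E ^ 2)) high
    intro s hs
    have h1 : E ^ 2 ≤ Real.exp (-2 * (α s - α v)) := by
      rw [hE2]
      apply Real.exp_le_exp.2
      have := hαmono s u hs.2
      linarith
    exact mul_le_mul_of_nonneg_right h1 (sq_nonneg _)
  -- positivity of denominators
  have h1E2 : 0 < 1 - E ^ 2 := by nlinarith
  have hvmpos : 0 < vm u v := lt_of_lt_of_le (by positivity) hB5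
  have hvhatpos : 0 < vhat u v := lt_of_lt_of_le (by positivity) hB2
  -- abbreviations
  set A := δ₂ - δ₁ * E with hA
  set B := (2 - δ₁) - (2 - δ₂) * E with hB
  have hApos : 0 < A := by nlinarith
  have hBpos : 0 < B := by nlinarith
  rw [div_le_div_iff₀ hvhatpos hvmpos]
  -- case split
  rcases le_or_gt ((2 - δ₂) * E) δ₂ with hcase | hcase
  · -- far case: use H4
    have hAB : A * (2 - δ₂) ≤ B * δ₂ := by nlinarith
    set s := Real.sqrt (vlow / vbar) with hs
    have hs0 : 0 ≤ s := Real.sqrt_nonneg _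
    have hs2 : s ^ 2 = vlow / vbar := Real.sq_sqrt (by positivity)
    have hδ2s : δ₂ ≤ (2 - δ₂) * s := by
      rw [div_le_iff₀ (by linarith)] at hH4
      linarith [hH4]
    have hABs : A ≤ B * s := by nlinarith
    have hA2 : A ^ 2 * vbar ≤ B ^ 2 * vlow := by
      have h1 : A ^ 2 ≤ (B * s) ^ 2 := by nlinarith
      have h2 : (B * s) ^ 2 = B ^ 2 * (vlow / vbar) := by rw [mul_pow, hs2]
      rw [h2] at h1
      calc A ^ 2 * vbar ≤ B ^ 2 * (vlow / vbar) * vbar :=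
          mul_le_mul_of_nonneg_right h1 (le_of_lt hvbar0)
        _ = B ^ 2 * vlow := by field_simp
    calc A ^ 2 * vm u v ≤ A ^ 2 * (vbar * (1 - E ^ 2)) :=
        mul_le_mul_of_nonneg_left hB1 (sq_nonneg _)
      _ = (A ^ 2 * vbar) * (1 - E ^ 2) := by ring
      _ ≤ (B ^ 2 * vlow) * (1 - E ^ 2) :=
        mul_le_mul_of_nonneg_right hA2 (le_of_lt h1E2)
      _ = B ^ 2 * (vlow * (1 - E ^ 2)) := by ring
      _ ≤ B ^ 2 * vhat u v := mul_le_mul_of_nonneg_left hB2 (sq_nonneg _)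
  · -- near case: A ≤ B * E
    have hABE : A ≤ B * E := by nlinarith
    calc A ^ 2 * vm u v ≤ A ^ 2 * I := mul_le_mul_of_nonneg_left hB3 (sq_nonneg _)
      _ ≤ (B * E) ^ 2 * I := by
          have h : A ^ 2 ≤ (B * E) ^ 2 := by nlinarith
          exact mul_le_mul_of_nonneg_right h hI0
      _ = B ^ 2 * (E ^ 2 * I) := by ring
      _ ≤ B ^ 2 * vhat u v := mul_le_mul_of_nonneg_left hB4 (sq_nonneg _)
end

section
/- Subadditivity of exit rates along paths (equation (fpK12:7)). Let 0 < δ₁ < δ₂ < 1. For all v ≤ u ≤ t one has δ₂² / v̂₊(t,v) ≤ δ₁² / v̂₊(t,u) + (δ₂ − δ₁ e^{−α(u,v)})² / v̂₊(u,v). -/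
open MeasureTheory intervalIntegral

lemma cs_key (x y p q : ℝ) (hp : 0 < p) (hq : 0 < q) :
    (x + y) ^ 2 / (p + q) ≤ x ^ 2 / p + y ^ 2 / q := by
  rw [div_add_div _ _ hp.ne' hq.ne', div_le_div_iff₀ (by positivity) (by positivity)]
  nlinarith [sq_nonneg (x * q - y * p), mul_pos hp hq]

/-- Subadditivity of exit rates along paths (equation (fpK12:7)). -/
theorem rate_subadditivity
    (T : ℝ) (hT : 0 < T) (a g : ℝ → ℝ)
    (ha : Continuous a) (hg : Continuous g)
    (haper : ∀ t, a (t + T) = a t) (hgper : ∀ t, g (t + T) = g t)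
    (a0 g0 : ℝ) (ha0 : 0 < a0) (hg0 : 0 < g0)
    (halb : ∀ t, a0 ≤ a t) (hglb : ∀ t, g0 ≤ g t)
    (α : ℝ → ℝ) (hα : ∀ t, α t = ∫ u in (0:ℝ)..t, a u)
    (vhat : ℝ → ℝ → ℝ)
    (hvhat : ∀ t s, vhat t s = ∫ u in s..t, Real.exp (-2 * (α u - α s)) * g u ^ 2)
    (δ₁ δ₂ : ℝ) (hδ₁ : 0 < δ₁) (hδ₁₂ : δ₁ < δ₂) (hδ₂ : δ₂ < 1) :
    ∀ v u t : ℝ, v < u → u < t →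
      δ₂ ^ 2 / vhat t v
        ≤ δ₁ ^ 2 / vhat t u
          + (δ₂ - δ₁ * Real.exp (-(α u - α v))) ^ 2 / vhat u v := by
  intro v u t hvu hut
  have hαc : Continuous α := by
    have h : Continuous fun t => ∫ u in (0:ℝ)..t, a u :=
      intervalIntegral.continuous_primitive (fun _ _ => ha.intervalIntegrable _ _) 0
    have : α = fun t => ∫ u in (0:ℝ)..t, a u := funext hα
    rw [this]; exact h
  have hfc : ∀ s : ℝ, Continuous fun x => Real.exp (-2 * (α x - α s)) * g x ^ 2 := by
    intro s
    exact ((continuous_const.mul (hαc.sub continuous_const)).rexp).mul (hg.pow 2)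
  have hfpos : ∀ s x : ℝ, 0 < Real.exp (-2 * (α x - α s)) * g x ^ 2 := by
    intro s x
    exact mul_pos (Real.exp_pos _) (pow_pos (lt_of_lt_of_le hg0 (hglb x)) 2)
  have hpos : ∀ s r : ℝ, s < r → 0 < vhat r s := by
    intro s r hsr
    rw [hvhat]
    exact intervalIntegral.intervalIntegral_pos_of_pos
      ((hfc s).intervalIntegrable s r) (fun x => hfpos s x) hsr
  set c : ℝ := Real.exp (-(α u - α v)) with hc
  have hc0 : 0 < c := Real.exp_pos _
  have hsplit : vhat t v = vhat u v + c ^ 2 * vhat t u := by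
    rw [hvhat, hvhat, hvhat]
    rw [← intervalIntegral.integral_add_adjacent_intervals
      ((hfc v).intervalIntegrable v u) ((hfc v).intervalIntegrable u t)]
    congr 1
    rw [← intervalIntegral.integral_const_mul]
    apply intervalIntegral.integral_congr
    intro x _
    have : c ^ 2 * Real.exp (-2 * (α x - α u)) = Real.exp (-2 * (α x - α v)) := by
      rw [hc, sq, ← Real.exp_add, ← Real.exp_add]
      ring_nf
    show Real.exp (-2 * (α x - α v)) * g x ^ 2 = c ^ 2 * (Real.exp (-2 * (α x - α u)) * g x ^ 2)
    rw [← this]; ring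
  have hA : 0 < vhat t u := hpos u t hut
  have hB : 0 < vhat u v := hpos v u hvu
  rw [hsplit]
  have key := cs_key (δ₂ - δ₁ * c) (δ₁ * c) (vhat u v) (c ^ 2 * vhat t u) hB
    (by positivity)
  have h1 : δ₂ - δ₁ * c + δ₁ * c = δ₂ := by ring
  rw [h1] at key
  have h2 : (δ₁ * c) ^ 2 / (c ^ 2 * vhat t u) = δ₁ ^ 2 / vhat t u := by
    rw [mul_pow]; rw [mul_comm (c ^ 2) (vhat t u)] -- (δ₁^2 * c^2)/(vhat t u * c^2)
    rw [mul_div_mul_right _ _ (by positivity : c ^ 2 ≠ 0)]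
  rw [h2] at key
  linarith
end

section
/- Lower bound on the relative excess rate χ (equations (fpu18:9)–(fpu18:10)). Fix s < t, 0 < δ₁ < δ₂ < 1 and c* ≥ 1. For u ∈ (s,t), define κ(u) = (δ₂/δ₁) e^{−α(u,s)}, r(u) = v̂₊(u,s)/v̂₊(t,s) ∈ (0,1), and χ(u) = (κ(u) − (1−r(u)))² / (r(u)(1−r(u))). If v̂₊(t,u) ≤ c* v̂₊(t,s) and 1 − r(u) ≤ 1/c*, then χ(u) ≥ (δ₂ − δ₁)² / (c* δ₁²). -/
open MeasureTheory intervalIntegral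


private lemma chi_alg (δ₁ δ₂ cstar κ r E : ℝ)
    (hδ₁ : 0 < δ₁) (hδ₁₂ : δ₁ < δ₂) (hδ₂ : δ₂ < 1)
    (hc : 1 ≤ cstar) (hr0 : 0 < r) (hr1 : r < 1) (hE0 : 0 < E)
    (hκE : κ = δ₂ / δ₁ * E)
    (hq2 : 1 - r ≤ E ^ 2 * cstar) (hq3 : 1 - r ≤ 1 / cstar) :
    (δ₂ - δ₁) ^ 2 / (cstar * δ₁ ^ 2) ≤ (κ - (1 - r)) ^ 2 / (r * (1 - r)) := by
  have hc0 : (0:ℝ) < cstar := lt_of_lt_of_le one_pos hc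
  have hqc : (1 - r) ^ 2 ≤ E ^ 2 := by
    have h1 : (1 - r) * (1 - r) ≤ (E ^ 2 * cstar) * (1 / cstar) := by
      apply mul_le_mul hq2 hq3 (by linarith)
        (mul_nonneg (sq_nonneg E) hc0.le)
    rw [mul_one_div, mul_div_assoc, div_self hc0.ne'] at h1
    nlinarith
  have hκq : δ₂ / δ₁ * (1 - r) ≤ κ := by
    rw [hκE]
    have hd : 0 < δ₂ / δ₁ := div_pos (hδ₁.trans hδ₁₂) hδ₁
    have : 1 - r ≤ E := by nlinarith
    nlinarith
  rw [div_le_div_iff₀ (by positivity) (mul_pos hr0 (by linarith))]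
  have hδd : 0 < δ₂ - δ₁ := by linarith
  have h5 : δ₂ * (1 - r) ≤ κ * δ₁ := by
    have := mul_le_mul_of_nonneg_right hκq (le_of_lt hδ₁)
    calc δ₂ * (1 - r) = δ₂ / δ₁ * (1 - r) * δ₁ := by field_simp
    _ ≤ κ * δ₁ := this
  have h6 : κ * (δ₂ - δ₁) / δ₂ ≤ κ - (1 - r) := by
    rw [div_le_iff₀ (by linarith : (0:ℝ) < δ₂)]
    nlinarith [h5]
  have hκpos : 0 < κ := by
    rw [hκE]; exact mul_pos (div_pos (by linarith) hδ₁) hE0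
  have h7 : 0 ≤ κ * (δ₂ - δ₁) / δ₂ :=
    div_nonneg (mul_nonneg hκpos.le (by linarith)) (by linarith)
  have h8 : (κ * (δ₂ - δ₁) / δ₂) ^ 2 ≤ (κ - (1 - r)) ^ 2 := by
    apply pow_le_pow_left₀ h7 h6
  have h9 : (δ₂ / δ₁) ^ 2 * ((1 - r) / cstar) ≤ κ ^ 2 := by
    rw [hκE, mul_pow]
    have : (1 - r) / cstar ≤ E ^ 2 := by
      rw [div_le_iff₀ hc0]
      linarith [hq2]
    nlinarith [sq_nonneg (δ₂ / δ₁), div_pos (hδ₁.trans hδ₁₂) hδ₁]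
  have hid : δ₂ / δ₁ * ((δ₂ - δ₁) / δ₂) = (δ₂ - δ₁) / δ₁ := by
    rw [div_mul_div_comm, mul_comm δ₂ _, mul_div_mul_right _ _ (by linarith : δ₂ ≠ 0)]
  have h10 : (1 - r) / cstar * ((δ₂ - δ₁) / δ₁) ^ 2 ≤ (κ - (1 - r)) ^ 2 := by
    calc (1 - r) / cstar * ((δ₂ - δ₁) / δ₁) ^ 2
        = (1 - r) / cstar * (δ₂ / δ₁ * ((δ₂ - δ₁) / δ₂)) ^ 2 := by rw [hid]
      _ = (δ₂ / δ₁) ^ 2 * ((1 - r) / cstar) * ((δ₂ - δ₁) / δ₂) ^ 2 := by ring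
      _ ≤ κ ^ 2 * ((δ₂ - δ₁) / δ₂) ^ 2 := by
          apply mul_le_mul_of_nonneg_right h9 (by positivity)
      _ = (κ * (δ₂ - δ₁) / δ₂) ^ 2 := by ring
      _ ≤ (κ - (1 - r)) ^ 2 := h8
  have hq0 : 0 < 1 - r := by linarith
  have h11 := mul_le_mul_of_nonneg_right h10 (le_of_lt (mul_pos hc0 (pow_pos hδ₁ 2)))
  have h12 : (1 - r) / cstar * ((δ₂ - δ₁) / δ₁) ^ 2 * (cstar * δ₁ ^ 2)
      = (1 - r) * (δ₂ - δ₁) ^ 2 := by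
    field_simp
  rw [h12] at h11
  nlinarith [sq_nonneg (δ₂ - δ₁), hq0, hr1, h11,
    mul_nonneg (sq_nonneg (δ₂ - δ₁)) hq0.le]

/-- Lower bound on the relative excess rate χ (equations (fpu18:9)–(fpu18:10)). -/
theorem chi_lower_bound
    (T : ℝ) (hT : 0 < T) (a g : ℝ → ℝ)
    (ha : Continuous a) (hg : Continuous g)
    (haper : ∀ t, a (t + T) = a t) (hgper : ∀ t, g (t + T) = g t)
    (a0 g0 : ℝ) (ha0 : 0 < a0) (hg0 : 0 < g0)
    (halb : ∀ t, a0 ≤ a t) (hglb : ∀ t, g0 ≤ g t)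
    (α : ℝ → ℝ) (hα : ∀ t, α t = ∫ u in (0:ℝ)..t, a u)
    (vhat : ℝ → ℝ → ℝ)
    (hvhat : ∀ t s, vhat t s = ∫ u in s..t, Real.exp (-2 * (α u - α s)) * g u ^ 2)
    (δ₁ δ₂ : ℝ) (hδ₁ : 0 < δ₁) (hδ₁₂ : δ₁ < δ₂) (hδ₂ : δ₂ < 1)
    (s t : ℝ) (hst : s < t)
    (cstar : ℝ) (hcstar : 1 ≤ cstar)
    (u : ℝ) (hsu : s < u) (hut : u < t)
    (κ r χ : ℝ)
    (hκ : κ = δ₂ / δ₁ * Real.exp (-(α u - α s)))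
    (hr : r = vhat u s / vhat t s)
    (hr01 : 0 < r ∧ r < 1)
    (hχ : χ = (κ - (1 - r)) ^ 2 / (r * (1 - r)))
    (hvc : vhat t u ≤ cstar * vhat t s)
    (hru : 1 - r ≤ 1 / cstar) :
    (δ₂ - δ₁) ^ 2 / (cstar * δ₁ ^ 2) ≤ χ := by
  obtain ⟨hr0, hr1⟩ := hr01
  have hc0 : (0:ℝ) < cstar := lt_of_lt_of_le one_pos hcstar
  -- continuity of α
  have hαc : Continuous α := by
    have hαe : α = fun t => ∫ u in (0:ℝ)..t, a u := funext hα
    rw [hαe]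
    exact intervalIntegral.continuous_primitive (fun x y => ha.intervalIntegrable x y) 0
  set f : ℝ → ℝ := fun w => Real.exp (-2 * (α w - α s)) * g w ^ 2 with hf
  have hfc : Continuous f := by
    apply Continuous.mul
    · exact Real.continuous_exp.comp (by fun_prop)
    · exact hg.pow 2
  have hfpos : ∀ w, 0 < f w := fun w =>
    mul_pos (Real.exp_pos _) (pow_pos (lt_of_lt_of_le hg0 (hglb w)) 2)
  set E : ℝ := Real.exp (-(α u - α s)) with hE
  have hE0 : 0 < E := Real.exp_pos _
  -- split the integral
  have hsplit : vhat t s - vhat u s = ∫ w in u..t, f w := by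
    rw [hvhat t s, hvhat u s, ← intervalIntegral.integral_add_adjacent_intervals
      (hfc.intervalIntegrable s u) (hfc.intervalIntegrable u t)]
    ring
  have hkey : vhat t s - vhat u s = E ^ 2 * vhat t u := by
    rw [hsplit, hvhat t u, ← intervalIntegral.integral_const_mul]
    apply intervalIntegral.integral_congr
    intro w _
    show Real.exp (-2 * (α w - α s)) * g w ^ 2
        = E ^ 2 * (Real.exp (-2 * (α w - α u)) * g w ^ 2)
    rw [hE, ← Real.exp_nat_mul, ← mul_assoc, ← Real.exp_add]
    congr 2
    ring
  have hvtspos : 0 < vhat t s := by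
    rw [hvhat t s]
    exact intervalIntegral.intervalIntegral_pos_of_pos_on
      (hfc.intervalIntegrable s t) (fun x _ => hfpos x) (hsu.trans hut)
  -- vhat u s = r * vhat t s
  have hus : vhat u s = r * vhat t s := by
    rw [hr, div_mul_cancel₀ _ hvtspos.ne']
  have hq1 : (1 - r) * vhat t s = E ^ 2 * vhat t u := by
    rw [← hkey, hus]; ring
  -- 1 - r ≤ E^2 * cstar
  have hq2 : 1 - r ≤ E ^ 2 * cstar := by
    have h1 : (1 - r) * vhat t s ≤ E ^ 2 * cstar * vhat t s := by
      rw [hq1]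
      have := mul_le_mul_of_nonneg_left hvc (le_of_lt (pow_pos hE0 2))
      linarith [this]
    exact le_of_mul_le_mul_right (by linarith) hvtspos
  rw [hχ]
  exact chi_alg δ₁ δ₂ cstar κ r E hδ₁ hδ₁₂ hδ₂ hcstar hr0 hr1 hE0 hκ hq2 hru
end

section
/- Lower bound on θ at interior critical points (equations (fpu18:11)–(fpu18:12)). Fix s < t, 0 < δ₁ < δ₂ < 1, c* ≥ 1 and Δ ∈ (0,1), and assume v̂per₊(w) ≤ 2 v*(w) (1−Δ) for all w. For u ∈ (s,t), define κ(u) = (δ₂/δ₁) e^{−α(u,s)}, r(u) = v̂₊(u,s)/v̂₊(t,s), and θ(u) = κ(u) + r(u) − 1. If θ′(u) = 0, which is equivalent to κ(u) = 2 v*(u) e^{−2α(u,s)} / v̂₊(t,s), and if 1 − r(u) ≥ 1/c*, then θ(u) = (e^{−2α(u,s)}/v̂₊(t,s)) (2 v*(u) − v̂₊(t,u)) ≥ Δ/(c*(1−Δ)). -/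
/-!
At a critical point the splitting
`v̂₊(t,s) = v̂₊(u,s) + e^{-2α(u,s)} v̂₊(t,u)` turns `θ` into
`e^{-2α(u,s)} (2v*(u) - v̂₊(t,u)) / v̂₊(t,s)` and `1 - r` into
`e^{-2α(u,s)} v̂₊(t,u) / v̂₊(t,s)`, so the bound follows from
`v̂₊(t,u) ≤ v̂per₊(u) ≤ 2v*(u)(1 - Δ)`.
For the first inequality, periodicity gives
`v̂₊(t+T,u) = v̂₊(u+T,u) + e^{-2λT} v̂₊(t,u)`, and `v̂₊(t,u) ≤ v̂₊(t+T,u)`; hence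
`(1 - e^{-2λT}) v̂₊(t,u) ≤ v̂₊(u+T,u) = (1 - e^{-2λT}) v̂per₊(u)`.
-/

open MeasureTheory intervalIntegral Function Real

/-- `v̂₊(t, s)` of the paper is `dampedIntegral α (g ^ 2) t s`. -/
noncomputable def dampedIntegral (α h : ℝ → ℝ) (t s : ℝ) : ℝ :=
  ∫ p in s..t, exp (-2 * (α p - α s)) * h p

section dampedIntegral

variable {α h : ℝ → ℝ}

theorem dampedIntegral_add (hα : Continuous α) (hh : Continuous h) (s x t : ℝ) :
    dampedIntegral α h t s =
      dampedIntegral α h x s + exp (-2 * (α x - α s)) * dampedIntegral α h t x := by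
  have hint (a b : ℝ) :
      IntervalIntegrable (fun p => exp (-2 * (α p - α s)) * h p) volume a b :=
    (by fun_prop : Continuous _).intervalIntegrable a b
  rw [dampedIntegral, ← integral_add_adjacent_intervals (hint s x) (hint x t), dampedIntegral,
    dampedIntegral, ← intervalIntegral.integral_const_mul]
  congr 1
  refine integral_congr fun p _ => ?_
  simp only [← mul_assoc, ← exp_add]
  ring_nf

theorem dampedIntegral_nonneg (hh : ∀ p, 0 ≤ h p) {s t : ℝ} (hst : s ≤ t) :
    0 ≤ dampedIntegral α h t s :=
  integral_nonneg hst fun p _ => mul_nonneg (exp_pos _).le (hh p)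

theorem dampedIntegral_pos (hα : Continuous α) (hh : Continuous h) (hpos : ∀ p, 0 < h p)
    {s t : ℝ} (hst : s < t) : 0 < dampedIntegral α h t s :=
  intervalIntegral_pos_of_pos_on ((by fun_prop : Continuous _).intervalIntegrable s t)
    (fun p _ => mul_pos (exp_pos _) (hpos p)) hst

theorem dampedIntegral_add_period {T c : ℝ} (hshift : ∀ x, α (x + T) = α x + c)
    (hper : Periodic h T) (s t : ℝ) :
    dampedIntegral α h (t + T) (s + T) = dampedIntegral α h t s := by
  rw [dampedIntegral, dampedIntegral, ← integral_comp_add_right]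
  refine integral_congr fun p _ => ?_
  simp only [hshift, hper p]
  ring_nf

theorem dampedIntegral_le_periodicLimit {T c : ℝ} (hα : Continuous α) (hh : Continuous h)
    (h0 : ∀ p, 0 ≤ h p) (hper : Periodic h T) (hT : 0 ≤ T) (hc : 0 < c)
    (hshift : ∀ x, α (x + T) = α x + c) (t u : ℝ) :
    dampedIntegral α h t u ≤
      (exp (2 * c) - 1)⁻¹ * ∫ p in u..u + T, exp (2 * (α (u + T) - α p)) * h p := by
  have htail : ∫ p in u..u + T, exp (2 * (α (u + T) - α p)) * h p =
      exp (2 * c) * dampedIntegral α h (u + T) u := by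
    rw [dampedIntegral, ← intervalIntegral.integral_const_mul]
    refine integral_congr fun p _ => ?_
    simp only [hshift, ← mul_assoc, ← exp_add]
    ring_nf
  have hmono : dampedIntegral α h t u ≤ dampedIntegral α h (t + T) u := by
    rw [dampedIntegral_add hα hh u t (t + T)]
    exact le_add_of_nonneg_right
      (mul_nonneg (exp_pos _).le (dampedIntegral_nonneg h0 (le_add_of_nonneg_right hT)))
  have hrec : dampedIntegral α h (t + T) u =
      dampedIntegral α h (u + T) u + exp (-2 * c) * dampedIntegral α h t u := by
    rw [dampedIntegral_add hα hh u (u + T) (t + T), dampedIntegral_add_period hshift hper, hshift]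
    ring_nf
  have hE : 1 < exp (2 * c) := one_lt_exp_iff.2 (by positivity)
  have hqE : exp (-2 * c) * exp (2 * c) = 1 := by rw [← exp_add]; simp
  rw [htail, ← mul_assoc, inv_mul_eq_div, div_mul_eq_mul_div, le_div_iff₀ (sub_pos.2 hE)]
  linear_combination exp (2 * c) * (hmono.trans_eq hrec) + dampedIntegral α h t u * hqE

end dampedIntegral

theorem critical_theta_lower_bound {A V x y v Δ c : ℝ} (hV : 0 < V) (hA : 0 ≤ A)
    (hsplit : V = y + A * x) (hx : x ≤ 2 * v * (1 - Δ)) (hΔ : 0 ≤ Δ) (hΔ1 : Δ < 1) (hc : 0 < c)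
    (hy : 1 / c ≤ 1 - y / V) : Δ / (c * (1 - Δ)) ≤ A / V * (2 * v - x) := by
  have h1Δ : 0 < 1 - Δ := sub_pos.2 hΔ1
  have hyV : 1 - y / V = A / V * x := by field_simp; linarith
  calc Δ / (c * (1 - Δ)) = 1 / c * (Δ / (1 - Δ)) := by field_simp
    _ ≤ A / V * x * (Δ / (1 - Δ)) := by gcongr; exact hyV ▸ hy
    _ ≤ A / V * (2 * v - x) := by
      rw [mul_assoc]
      gcongr
      rw [mul_div_assoc', div_le_iff₀ h1Δ]
      nlinarith

theorem theta_lower_bound_critical_general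
    (T : ℝ) (hT : 0 < T) (a g : ℝ → ℝ)
    (ha : ContDiff ℝ 1 a) (hg : ContDiff ℝ 1 g)
    (haper : ∀ t, a (t + T) = a t) (hgper : ∀ t, g (t + T) = g t)
    (a0 g0 : ℝ) (ha0 : 0 < a0) (hg0 : 0 < g0)
    (halb : ∀ t, a0 ≤ a t) (hglb : ∀ t, g0 ≤ g t)
    (α : ℝ → ℝ) (hα : ∀ t, α t = ∫ u in (0:ℝ)..t, a u)
    (lam : ℝ) (hlam : lam = α T / T)
    (vstar : ℝ → ℝ)
    (vhat : ℝ → ℝ → ℝ)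
    (hvhat : ∀ t s, vhat t s = ∫ u in s..t, Real.exp (-2 * (α u - α s)) * g u ^ 2)
    (vhatper : ℝ → ℝ)
    (hvhatper : ∀ t, vhatper t = (Real.exp (2 * lam * T) - 1)⁻¹ *
      ∫ s in t..t + T, Real.exp (2 * (α (t + T) - α s)) * g s ^ 2)
    (cstar : ℝ) (hcstar : 1 ≤ cstar)
    (Δ : ℝ) (hΔ : 0 < Δ) (hΔ1 : Δ < 1)
    (hH3 : ∀ w, vhatper w ≤ 2 * vstar w * (1 - Δ))
    (s t u : ℝ) (hst : s < t)
    (κ r θ : ℝ)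
    (hr : r = vhat u s / vhat t s)
    (hθ : θ = κ + r - 1)
    (hcrit : κ = 2 * vstar u * Real.exp (-2 * (α u - α s)) / vhat t s)
    (hru : 1 / cstar ≤ 1 - r) :
    θ = Real.exp (-2 * (α u - α s)) / vhat t s * (2 * vstar u - vhat t u)
    ∧ Δ / (cstar * (1 - Δ)) ≤ θ := by
  have hac := ha.continuous
  have hg2 : Continuous fun p => g p ^ 2 := by fun_prop
  have hαc : Continuous α := by
    rw [funext hα]
    exact continuous_primitive (fun x y => hac.intervalIntegrable x y) 0
  have hαshift (x : ℝ) : α (x + T) = α x + α T := by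
    simpa [hα] using (show Periodic a T from haper).intervalIntegral_add_eq_add 0 x
      fun _ _ => hac.intervalIntegrable _ _
  have hαT : 0 < α T := by
    rw [hα]
    exact intervalIntegral_pos_of_pos_on (hac.intervalIntegrable _ _)
      (fun p _ => ha0.trans_le (halb p)) hT
  obtain rfl : vhat = dampedIntegral α (fun p => g p ^ 2) := funext₂ hvhat
  have hsplit := dampedIntegral_add hαc hg2 s u t
  have hV := dampedIntegral_pos hαc hg2 (fun p => pow_pos (hg0.trans_le (hglb p)) 2) hst
  have hbound : dampedIntegral α (fun p => g p ^ 2) t u ≤ vhatper u := by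
    rw [hvhatper, hlam, mul_assoc, div_mul_cancel₀ _ hT.ne']
    exact dampedIntegral_le_periodicLimit hαc hg2 (fun p => sq_nonneg _)
      (fun p => by simp only [hgper]) hT.le hαT hαshift t u
  have hθeq : θ = Real.exp (-2 * (α u - α s)) / dampedIntegral α (fun p => g p ^ 2) t s *
      (2 * vstar u - dampedIntegral α (fun p => g p ^ 2) t u) := by
    rw [hθ, hcrit, hr]
    set A := Real.exp (-2 * (α u - α s))
    field_simp
    linear_combination -hsplit
  refine ⟨hθeq, hθeq ▸ critical_theta_lower_bound hV (exp_pos _).le hsplit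
    (hbound.trans (hH3 u)) hΔ.le hΔ1 (one_pos.trans_le hcstar) (hr ▸ hru)⟩

/-- Lower bound on θ at interior critical points
(equations (fpu18:11)–(fpu18:12)). -/
theorem theta_lower_bound_critical
    (T : ℝ) (hT : 0 < T) (a g : ℝ → ℝ)
    (ha : ContDiff ℝ 1 a) (hg : ContDiff ℝ 1 g)
    (haper : ∀ t, a (t + T) = a t) (hgper : ∀ t, g (t + T) = g t)
    (a0 g0 : ℝ) (ha0 : 0 < a0) (hg0 : 0 < g0)
    (halb : ∀ t, a0 ≤ a t) (hglb : ∀ t, g0 ≤ g t)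
    (α : ℝ → ℝ) (hα : ∀ t, α t = ∫ u in (0:ℝ)..t, a u)
    (lam : ℝ) (hlam : lam = α T / T)
    (vstar : ℝ → ℝ) (hvstar : ∀ t, vstar t = g t ^ 2 / (2 * a t))
    (vhat : ℝ → ℝ → ℝ)
    (hvhat : ∀ t s, vhat t s = ∫ u in s..t, Real.exp (-2 * (α u - α s)) * g u ^ 2)
    (vhatper : ℝ → ℝ)
    (hvhatper : ∀ t, vhatper t = (Real.exp (2 * lam * T) - 1)⁻¹ *
      ∫ s in t..t + T, Real.exp (2 * (α (t + T) - α s)) * g s ^ 2)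
    (δ₁ δ₂ : ℝ) (hδ₁ : 0 < δ₁) (hδ₁₂ : δ₁ < δ₂) (hδ₂ : δ₂ < 1)
    (cstar : ℝ) (hcstar : 1 ≤ cstar)
    (Δ : ℝ) (hΔ : 0 < Δ) (hΔ1 : Δ < 1)
    (hH3 : ∀ w, vhatper w ≤ 2 * vstar w * (1 - Δ))
    (s t u : ℝ) (hst : s < t) (hsu : s < u) (hut : u < t)
    (κ r θ : ℝ)
    (hκ : κ = δ₂ / δ₁ * Real.exp (-(α u - α s)))
    (hr : r = vhat u s / vhat t s)
    (hθ : θ = κ + r - 1)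
    (hcrit : κ = 2 * vstar u * Real.exp (-2 * (α u - α s)) / vhat t s)
    (hru : 1 / cstar ≤ 1 - r) :
    θ = Real.exp (-2 * (α u - α s)) / vhat t s * (2 * vstar u - vhat t u)
    ∧ Δ / (cstar * (1 - Δ)) ≤ θ :=
  theta_lower_bound_critical_general T hT a g ha hg haper hgper a0 g0 ha0 hg0 halb hglb α hα lam
    hlam vstar vhat hvhat vhatper hvhatper cstar hcstar Δ hΔ hΔ1 hH3 s t u hst κ r θ hr hθ hcrit hru
end

section
/- Lower bound on the total rate in the transient regime (equations (xll4b)–(xll4d)). Let δ₁ ∈ (0,1) and define ρper(s)² = δ₁²/v̂per₊(s) + (2−δ₁)²/vper₋(s), ρ⁰(t,s)² = δ₁²/v̂₊(t,s) + (2−δ₁)²/v₋(s,0), β₁ = δ₁ √(v̂per₊(t)) / v̄ and β₂ = (2−δ₁) √(vper₋(0)) / v̄, where v̄ = max_{[0,T]} v*. Then for all 0 < s < t one has ρ⁰(t,s)² ≥ inf_{w∈[0,T]} ρper(w)² + β₁² e^{−2α(t,s)} + β₂² e^{−2α(s)} ≥ inf_{w∈[0,T]} ρper(w)² + 2 β₁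 β₂ e^{−α(t)}. -/
/-!
Both periodic variances are weighted averages of `v* = g² / (2a)` over one period, hence positive,
at most `v̄`, and `T`-periodic, so `ρper(s)² ≥ inf ρper²` for every `s`. Because the integrands
`e^{∓2α} g²` are multiplicatively `T`-periodic, the transient variances differ from the periodic
ones by a decaying term: `v̂₊(t,s) = v̂per₊(s) - e^{-2α(t,s)} v̂per₊(t)` and
`v₋(s,0) = vper₋(s) - e^{-2α(s)} vper₋(0)`. The first inequality then follows from
`d²/(A - x) ≥ d²/A + d² x / v̄²` for `0 ≤ x < A ≤ v̄`, and the second is AM-GM.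
-/

open MeasureTheory intervalIntegral Real Function

theorem integral_add_period_sub_integral_add_period {E : Type*} [NormedAddCommGroup E]
    [NormedSpace ℝ E] {w : ℝ → E} {T κ : ℝ}
    (hw : ∀ u, w (u + T) = κ • w u) (hint : ∀ p q, IntervalIntegrable w volume p q) (p q : ℝ) :
    (∫ u in p..p + T, w u) - ∫ u in q..q + T, w u = (1 - κ) • ∫ u in p..q, w u := by
  rw [integral_interval_sub_interval_comm (hint _ _) (hint _ _) (hint _ _),
    ← integral_comp_add_right]
  simp only [hw, intervalIntegral.integral_smul, sub_smul, one_smul]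

theorem Function.Periodic.mem_upperBounds_range {G β : Type*} [AddCommGroup G] [LinearOrder G]
    [IsOrderedAddMonoid G] [Archimedean G] [Preorder β] {f : G → β} {T : G} {b : β}
    (hf : Periodic f T) (hT : 0 < T) (hb : b ∈ upperBounds (f '' Set.Icc 0 T)) :
    b ∈ upperBounds (Set.range f) := by
  rwa [← hf.image_Icc hT 0, zero_add]

theorem Function.Periodic.mem_lowerBounds_range {G β : Type*} [AddCommGroup G] [LinearOrder G]
    [IsOrderedAddMonoid G] [Archimedean G] [Preorder β] {f : G → β} {T : G} {b : β}
    (hf : Periodic f T) (hT : 0 < T) (hb : b ∈ lowerBounds (f '' Set.Icc 0 T)) :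
    b ∈ lowerBounds (Set.range f) := by
  rwa [← hf.image_Icc hT 0, zero_add]

theorem two_mul_mul_exp_neg_le (b₁ b₂ x y : ℝ) :
    2 * b₁ * b₂ * exp (-y) ≤ b₁ ^ 2 * exp (-2 * (y - x)) + b₂ ^ 2 * exp (-2 * x) := by
  have hy : exp (-y) = exp (-(y - x)) * exp (-x) := by rw [← exp_add]; ring_nf
  have hyx : exp (-2 * (y - x)) = exp (-(y - x)) ^ 2 := by rw [← exp_nat_mul]; ring_nf
  have hx : exp (-2 * x) = exp (-x) ^ 2 := by rw [← exp_nat_mul]; ring_nf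
  rw [hy, hyx, hx]
  nlinarith [sq_nonneg (b₁ * exp (-(y - x)) - b₂ * exp (-x))]

theorem integral_exp_mul_pos {h f : ℝ → ℝ} (hh : Continuous h) (hf : Continuous f)
    (hpos : ∀ u, 0 < f u) {p q : ℝ} (hpq : p < q) : 0 < ∫ u in p..q, exp (h u) * f u :=
  intervalIntegral_pos_of_pos_on ((hh.rexp.mul hf).intervalIntegrable _ _)
    (fun u _ => mul_pos (exp_pos _) (hpos u)) hpq

theorem div_add_sq_mul_le_div_sub {d A B V ε : ℝ} (hB : 0 ≤ B) (hε : 0 ≤ ε) (hAV : A ≤ V)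
    (hpos : 0 < A - ε * B) : d ^ 2 / A + (d * √B / V) ^ 2 * ε ≤ d ^ 2 / (A - ε * B) := by
  have hA : 0 < A := by nlinarith [mul_nonneg hε hB]
  have hV : 0 < V := hA.trans_le hAV
  have hgap : 0 ≤ V ^ 2 - A * (A - ε * B) := by nlinarith [mul_nonneg hε hB]
  rw [div_pow, mul_pow, sq_sqrt hB, ← sub_nonneg]
  have key : d ^ 2 / (A - ε * B) - (d ^ 2 / A + d ^ 2 * B / V ^ 2 * ε) =
      d ^ 2 * (ε * B) * (V ^ 2 - A * (A - ε * B)) / (A * (A - ε * B) * V ^ 2) := by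
    field_simp
    ring
  rw [key]
  positivity

section PeriodicVariance

variable {α a g : ℝ → ℝ} {T : ℝ}

theorem mul_integral_exp_mul_sub (hα : ∀ u, HasDerivAt α (a u) u) (ha : Continuous a)
    (c p q : ℝ) :
    c * ∫ u in p..q, exp (c * (α q - α u)) * a u = exp (c * (α q - α p)) - 1 := by
  have hαc : Continuous α := continuous_iff_continuousAt.2 fun u => (hα u).continuousAt
  rw [← intervalIntegral.integral_const_mul,
    integral_eq_sub_of_hasDerivAt (f := fun u => -exp (c * (α q - α u)))]
  · simp only [sub_self, mul_zero, exp_zero]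
    ring
  · intro u _
    convert (((hα u).const_sub (α q)).const_mul c).exp.fun_neg using 1
    ring
  · exact (by fun_prop : Continuous _).intervalIntegrable _ _

/-- The average of `v* = g² / (2a)` over `[t, t + T]` against the weight
`e^{c (α(t + T) - α(u))} a(u)`; `c = 2` gives `v̂per₊` and `c = -2` gives `vper₋`. -/
noncomputable def periodicVariance (α a g : ℝ → ℝ) (T c t : ℝ) : ℝ :=
  (∫ u in t..t + T, exp (c * (α (t + T) - α u)) * g u ^ 2) /
    (2 * ∫ u in t..t + T, exp (c * (α (t + T) - α u)) * a u)

theorem periodicVariance_eq (hα : ∀ u, HasDerivAt α (a u) u) (ha : Continuous a)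
    (hαT : ∀ u, α (u + T) = α u + α T) {c : ℝ} (hc : c ≠ 0) (t : ℝ) :
    periodicVariance α a g T c t = c / 2 * ((exp (c * α T) - 1)⁻¹ *
      ∫ u in t..t + T, exp (c * (α (t + T) - α u)) * g u ^ 2) := by
  have hden := mul_integral_exp_mul_sub hα ha c t (t + T)
  rw [show α (t + T) - α t = α T by rw [hαT, add_sub_cancel_left]] at hden
  rw [periodicVariance, ← hden, mul_inv]
  field_simp

theorem periodic_integral_exp_mul (hαT : ∀ u, α (u + T) = α u + α T) {f : ℝ → ℝ}
    (hf : Periodic f T) (c : ℝ) :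
    Periodic (fun t => ∫ u in t..t + T, exp (c * (α (t + T) - α u)) * f u) T := by
  intro t
  dsimp only
  rw [← integral_comp_add_right]
  refine integral_congr fun u _ => ?_
  simp only [hαT, hf u]
  ring_nf

theorem periodicVariance_periodic (hαT : ∀ u, α (u + T) = α u + α T) (ha : Periodic a T)
    (hg : Periodic g T) (c : ℝ) : Periodic (periodicVariance α a g T c) T := by
  intro t
  have hnum := periodic_integral_exp_mul hαT (f := fun u => g u ^ 2)
    (fun u => by simp only [hg u]) c t
  have hden := periodic_integral_exp_mul hαT ha c t
  dsimp only at hnum hden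
  rw [periodicVariance, periodicVariance, hnum, hden]

theorem periodicVariance_pos (hα : Continuous α) (ha : Continuous a) (hg : Continuous g)
    (ha0 : ∀ u, 0 < a u) (hg0 : ∀ u, g u ≠ 0) (hT : 0 < T) (c t : ℝ) :
    0 < periodicVariance α a g T c t :=
  div_pos (integral_exp_mul_pos (by fun_prop) (by fun_prop) (fun u => sq_pos_of_ne_zero (hg0 u))
      (by linarith))
    (mul_pos two_pos (integral_exp_mul_pos (by fun_prop) ha ha0 (by linarith)))

theorem periodicVariance_le (hα : Continuous α) (ha : Continuous a) (hg : Continuous g)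
    (ha0 : ∀ u, 0 < a u) (hT : 0 < T) {v : ℝ} (hv : ∀ u, g u ^ 2 ≤ 2 * a u * v) (c t : ℝ) :
    periodicVariance α a g T c t ≤ v := by
  rw [periodicVariance, div_le_iff₀ (mul_pos two_pos
    (integral_exp_mul_pos (by fun_prop) ha ha0 (by linarith)))]
  calc (∫ u in t..t + T, exp (c * (α (t + T) - α u)) * g u ^ 2)
      ≤ ∫ u in t..t + T, exp (c * (α (t + T) - α u)) * (2 * a u * v) :=
        integral_mono_on (by linarith) ((by fun_prop : Continuous _).intervalIntegrable _ _)
          ((by fun_prop : Continuous _).intervalIntegrable _ _)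
          fun u _ => mul_le_mul_of_nonneg_left (hv u) (exp_pos _).le
    _ = v * (2 * ∫ u in t..t + T, exp (c * (α (t + T) - α u)) * a u) := by
        rw [← intervalIntegral.integral_const_mul, ← intervalIntegral.integral_const_mul]
        exact integral_congr fun u _ => by ring

theorem periodicVariance_sub_exp_mul (hα : ∀ u, HasDerivAt α (a u) u) (ha : Continuous a)
    (hg : Continuous g) (hαT : ∀ u, α (u + T) = α u + α T) (hgT : Periodic g T)
    {c : ℝ} (hcT : c * α T ≠ 0) (p q : ℝ) :
    periodicVariance α a g T c p - exp (-c * (α q - α p)) * periodicVariance α a g T c q =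
      c / 2 * ∫ u in p..q, exp (-c * (α u - α p)) * g u ^ 2 := by
  have hαc : Continuous α := continuous_iff_continuousAt.2 fun u => (hα u).continuousAt
  set w : ℝ → ℝ := fun u => exp (-(c * α u)) * g u ^ 2
  have hwindow : ∀ t, ∫ u in t..t + T, exp (c * (α (t + T) - α u)) * g u ^ 2 =
      exp (c * α t) * exp (c * α T) * ∫ u in t..t + T, w u := fun t => by
    rw [← intervalIntegral.integral_const_mul]
    refine integral_congr fun u _ => ?_
    rw [hαT, show c * (α t + α T - α u) = c * α t + c * α T + -(c * α u) by ring,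
      exp_add, exp_add]
    ring
  have hshift : ∫ u in p..q, exp (-c * (α u - α p)) * g u ^ 2 =
      exp (c * α p) * ∫ u in p..q, w u := by
    rw [← intervalIntegral.integral_const_mul]
    refine integral_congr fun u _ => ?_
    rw [show -c * (α u - α p) = c * α p + -(c * α u) by ring, exp_add]
    ring
  have hw : ∀ u, w (u + T) = (exp (c * α T))⁻¹ • w u := fun u => by
    simp only [w, hαT, hgT u, smul_eq_mul]
    rw [show -(c * (α u + α T)) = -(c * α T) + -(c * α u) by ring, exp_add, exp_neg]
    ring
  have hdiff := integral_add_period_sub_integral_add_period hw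
    (fun _ _ => (by fun_prop : Continuous w).intervalIntegrable _ _) p q
  have hE : exp (c * α T) - 1 ≠ 0 := sub_ne_zero.2 fun h => hcT ((exp_eq_one_iff _).1 h)
  have hexp : exp (-c * (α q - α p)) = exp (c * α p) / exp (c * α q) := by
    rw [← exp_sub]; ring_nf
  rw [periodicVariance_eq hα ha hαT (left_ne_zero_of_mul hcT),
    periodicVariance_eq hα ha hαT (left_ne_zero_of_mul hcT), hwindow, hwindow, hshift, hexp,
    sub_eq_iff_eq_add.1 hdiff, smul_eq_mul]
  field_simp
  ring

theorem exp_mul_periodicVariance_sub (hα : ∀ u, HasDerivAt α (a u) u) (ha : Continuous a)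
    (hg : Continuous g) (hαT : ∀ u, α (u + T) = α u + α T) (hgT : Periodic g T)
    {c : ℝ} (hcT : c * α T ≠ 0) (p q : ℝ) :
    exp (c * (α q - α p)) * periodicVariance α a g T c p - periodicVariance α a g T c q =
      c / 2 * ∫ u in p..q, exp (c * (α q - α u)) * g u ^ 2 := by
  have hshift : ∫ u in p..q, exp (c * (α q - α u)) * g u ^ 2 =
      exp (c * (α q - α p)) * ∫ u in p..q, exp (-c * (α u - α p)) * g u ^ 2 := by
    rw [← intervalIntegral.integral_const_mul]
    refine integral_congr fun u _ => ?_
    rw [← mul_assoc, ← exp_add]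
    ring_nf
  rw [hshift, mul_left_comm, ← periodicVariance_sub_exp_mul hα ha hg hαT hgT hcT,
    mul_sub (exp _), ← mul_assoc, ← exp_add, neg_mul, add_neg_cancel, exp_zero, one_mul]

theorem periodic_rate_add_le_transient_rate (hα : ∀ u, HasDerivAt α (a u) u)
    (ha : Continuous a) (hg : Continuous g) (hαT : ∀ u, α (u + T) = α u + α T)
    (hgT : Periodic g T) (ha0 : ∀ u, 0 < a u) (hg0 : ∀ u, g u ≠ 0) (hT : 0 < T)
    (hαT0 : α T ≠ 0) {v : ℝ} (hv : ∀ u, g u ^ 2 ≤ 2 * a u * v) {r d e p s t : ℝ}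
    (hr : r ≤ d ^ 2 / periodicVariance α a g T 2 s + e ^ 2 / periodicVariance α a g T (-2) s)
    (hps : p < s) (hst : s < t) :
    r + (d * √(periodicVariance α a g T 2 t) / v) ^ 2 * exp (-2 * (α t - α s))
        + (e * √(periodicVariance α a g T (-2) p) / v) ^ 2 * exp (-2 * (α s - α p))
      ≤ d ^ 2 / (∫ u in s..t, exp (-2 * (α u - α s)) * g u ^ 2)
        + e ^ 2 / ∫ u in p..s, exp (-2 * (α s - α u)) * g u ^ 2 := by
  have hαc : Continuous α := continuous_iff_continuousAt.2 fun u => (hα u).continuousAt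
  have hfwd_eq : ∫ u in s..t, exp (-2 * (α u - α s)) * g u ^ 2 = periodicVariance α a g T 2 s -
      exp (-2 * (α t - α s)) * periodicVariance α a g T 2 t := by
    rw [periodicVariance_sub_exp_mul hα ha hg hαT hgT (mul_ne_zero two_ne_zero hαT0)]
    ring
  have hbwd_eq : ∫ u in p..s, exp (-2 * (α s - α u)) * g u ^ 2 = periodicVariance α a g T (-2) s -
      exp (-2 * (α s - α p)) * periodicVariance α a g T (-2) p := by
    have h := exp_mul_periodicVariance_sub hα ha hg hαT hgT (c := -2) (by simpa using hαT0) p s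
    linarith
  have hsq_pos : ∀ u, 0 < g u ^ 2 := fun u => sq_pos_of_ne_zero (hg0 u)
  have hfwd_pos : 0 < ∫ u in s..t, exp (-2 * (α u - α s)) * g u ^ 2 :=
    integral_exp_mul_pos (by fun_prop) (by fun_prop) hsq_pos hst
  have hbwd_pos : 0 < ∫ u in p..s, exp (-2 * (α s - α u)) * g u ^ 2 :=
    integral_exp_mul_pos (by fun_prop) (by fun_prop) hsq_pos hps
  rw [hfwd_eq] at hfwd_pos ⊢
  rw [hbwd_eq] at hbwd_pos ⊢
  have hW_pos := periodicVariance_pos hαc ha hg ha0 hg0 hT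
  have hW_le := periodicVariance_le hαc ha hg ha0 hT hv
  linarith [div_add_sq_mul_le_div_sub (d := d) (hW_pos 2 t).le (exp_pos _).le (hW_le 2 s)
      hfwd_pos,
    div_add_sq_mul_le_div_sub (d := e) (hW_pos (-2) p).le (exp_pos _).le (hW_le (-2) s) hbwd_pos]

end PeriodicVariance

theorem transient_rate_lower_bound_general
    (T : ℝ) (hT : 0 < T) (a g : ℝ → ℝ)
    (ha : Continuous a) (hg : Continuous g)
    (haper : ∀ t, a (t + T) = a t) (hgper : ∀ t, g (t + T) = g t)
    (a0 g0 : ℝ) (ha0 : 0 < a0) (hg0 : 0 < g0)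
    (halb : ∀ t, a0 ≤ a t) (hglb : ∀ t, g0 ≤ g t)
    (α : ℝ → ℝ) (hα : ∀ t, α t = ∫ u in (0:ℝ)..t, a u)
    (lam : ℝ) (hlam : lam = α T / T)
    (vstar : ℝ → ℝ) (hvstar : ∀ t, vstar t = g t ^ 2 / (2 * a t))
    (vbar : ℝ) (hvbar : IsGreatest (vstar '' Set.Icc 0 T) vbar)
    (vper : ℝ → ℝ)
    (hvper : ∀ t, vper t = (1 - Real.exp (-2 * lam * T))⁻¹ *
      ∫ s in t..t + T, Real.exp (-2 * (α (t + T) - α s)) * g s ^ 2)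
    (vhatper : ℝ → ℝ)
    (hvhatper : ∀ t, vhatper t = (Real.exp (2 * lam * T) - 1)⁻¹ *
      ∫ s in t..t + T, Real.exp (2 * (α (t + T) - α s)) * g s ^ 2)
    (vm : ℝ → ℝ → ℝ)
    (hvm : ∀ t t0, vm t t0 = ∫ s in t0..t, Real.exp (-2 * (α t - α s)) * g s ^ 2)
    (vhat : ℝ → ℝ → ℝ)
    (hvhat : ∀ t s, vhat t s = ∫ u in s..t, Real.exp (-2 * (α u - α s)) * g u ^ 2)
    (δ₁ : ℝ)
    (rmin : ℝ)
    (hrmin : IsLeast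
      ((fun w => δ₁ ^ 2 / vhatper w + (2 - δ₁) ^ 2 / vper w) '' Set.Icc 0 T) rmin) :
    ∀ s t : ℝ, 0 < s → s < t →
      (rmin + (δ₁ * Real.sqrt (vhatper t) / vbar) ^ 2 * Real.exp (-2 * (α t - α s))
            + ((2 - δ₁) * Real.sqrt (vper 0) / vbar) ^ 2 * Real.exp (-2 * α s)
          ≤ δ₁ ^ 2 / vhat t s + (2 - δ₁) ^ 2 / vm s 0)
      ∧ (rmin + 2 * (δ₁ * Real.sqrt (vhatper t) / vbar)
              * ((2 - δ₁) * Real.sqrt (vper 0) / vbar) * Real.exp (-(α t))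
          ≤ rmin + (δ₁ * Real.sqrt (vhatper t) / vbar) ^ 2 * Real.exp (-2 * (α t - α s))
            + ((2 - δ₁) * Real.sqrt (vper 0) / vbar) ^ 2 * Real.exp (-2 * α s)) := by
  have hαd : ∀ u, HasDerivAt α (a u) u := fun u => by
    rw [funext hα]; exact (ha.integral_hasStrictDerivAt 0 u).hasDerivAt
  have hαT : ∀ u, α (u + T) = α u + α T := fun u => by
    simpa only [hα, zero_add] using
      Periodic.intervalIntegral_add_eq_add haper 0 u fun _ _ => ha.intervalIntegrable _ _
  have hα0 : α 0 = 0 := by simp [hα]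
  have hapos : ∀ u, 0 < a u := fun u => ha0.trans_le (halb u)
  have hαTpos : 0 < α T := by
    rw [hα]
    exact intervalIntegral_pos_of_pos_on (ha.intervalIntegrable _ _) (fun u _ => hapos u) hT
  have hlamT : lam * T = α T := by rw [hlam]; field_simp
  obtain rfl : vhatper = periodicVariance α a g T 2 := funext fun t => by
    rw [hvhatper, periodicVariance_eq hαd ha hαT two_ne_zero, mul_assoc, hlamT]; ring
  obtain rfl : vper = periodicVariance α a g T (-2) := funext fun t => by
    rw [hvper, periodicVariance_eq hαd ha hαT (by norm_num), mul_assoc, hlamT, ← neg_sub, inv_neg]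
    ring
  have hgsq_le : ∀ u, g u ^ 2 ≤ 2 * a u * vbar := fun u => by
    have hu := Periodic.mem_upperBounds_range (fun t => by rw [hvstar, hvstar, haper, hgper]) hT
      hvbar.2 ⟨u, rfl⟩
    rwa [hvstar, div_le_iff₀ (mul_pos two_pos (hapos u)), mul_comm vbar] at hu
  have hrmin_le := Periodic.mem_lowerBounds_range (fun t => by
    simp only [periodicVariance_periodic hαT haper hgper _ t]) hT hrmin.2
  intro s t hs hst
  have hrate := periodic_rate_add_le_transient_rate hαd ha hg hαT hgper hapos
    (fun u => (hg0.trans_le (hglb u)).ne') hT hαTpos.ne' hgsq_le (hrmin_le ⟨s, rfl⟩) hs hst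
  rw [hα0, sub_zero, ← hvhat, ← hvm] at hrate
  refine ⟨hrate, ?_⟩
  linarith [two_mul_mul_exp_neg_le (δ₁ * √(periodicVariance α a g T 2 t) / vbar)
    ((2 - δ₁) * √(periodicVariance α a g T (-2) 0) / vbar) (α s) (α t)]

/-- Lower bound on the total rate in the transient regime
(equations (xll4b)–(xll4d)). -/
theorem transient_rate_lower_bound
    (T : ℝ) (hT : 0 < T) (a g : ℝ → ℝ)
    (ha : Continuous a) (hg : Continuous g)
    (haper : ∀ t, a (t + T) = a t) (hgper : ∀ t, g (t + T) = g t)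
    (a0 g0 : ℝ) (ha0 : 0 < a0) (hg0 : 0 < g0)
    (halb : ∀ t, a0 ≤ a t) (hglb : ∀ t, g0 ≤ g t)
    (α : ℝ → ℝ) (hα : ∀ t, α t = ∫ u in (0:ℝ)..t, a u)
    (lam : ℝ) (hlam : lam = α T / T)
    (vstar : ℝ → ℝ) (hvstar : ∀ t, vstar t = g t ^ 2 / (2 * a t))
    (vbar : ℝ) (hvbar : IsGreatest (vstar '' Set.Icc 0 T) vbar)
    (vper : ℝ → ℝ)
    (hvper : ∀ t, vper t = (1 - Real.exp (-2 * lam * T))⁻¹ *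
      ∫ s in t..t + T, Real.exp (-2 * (α (t + T) - α s)) * g s ^ 2)
    (vhatper : ℝ → ℝ)
    (hvhatper : ∀ t, vhatper t = (Real.exp (2 * lam * T) - 1)⁻¹ *
      ∫ s in t..t + T, Real.exp (2 * (α (t + T) - α s)) * g s ^ 2)
    (vm : ℝ → ℝ → ℝ)
    (hvm : ∀ t t0, vm t t0 = ∫ s in t0..t, Real.exp (-2 * (α t - α s)) * g s ^ 2)
    (vhat : ℝ → ℝ → ℝ)
    (hvhat : ∀ t s, vhat t s = ∫ u in s..t, Real.exp (-2 * (α u - α s)) * g u ^ 2)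
    (δ₁ : ℝ) (hδ₁ : 0 < δ₁) (hδ₁1 : δ₁ < 1)
    (rmin : ℝ)
    (hrmin : IsLeast
      ((fun w => δ₁ ^ 2 / vhatper w + (2 - δ₁) ^ 2 / vper w) '' Set.Icc 0 T) rmin) :
    ∀ s t : ℝ, 0 < s → s < t →
      (rmin + (δ₁ * Real.sqrt (vhatper t) / vbar) ^ 2 * Real.exp (-2 * (α t - α s))
            + ((2 - δ₁) * Real.sqrt (vper 0) / vbar) ^ 2 * Real.exp (-2 * α s)
          ≤ δ₁ ^ 2 / vhat t s + (2 - δ₁) ^ 2 / vm s 0)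
      ∧ (rmin + 2 * (δ₁ * Real.sqrt (vhatper t) / vbar)
              * ((2 - δ₁) * Real.sqrt (vper 0) / vbar) * Real.exp (-(α t))
          ≤ rmin + (δ₁ * Real.sqrt (vhatper t) / vbar) ^ 2 * Real.exp (-2 * (α t - α s))
            + ((2 - δ₁) * Real.sqrt (vper 0) / vbar) ^ 2 * Real.exp (-2 * α s)) :=
  transient_rate_lower_bound_general T hT a g ha hg haper hgper a0 g0 ha0 hg0 halb hglb α hα lam
    hlam vstar hvstar vbar hvbar vper hvper vhatper hvhatper vm hvm vhat hvhat δ₁ rmin hrmin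
end

section
/- Approximation of the cycling sum by its periodic limit (Proposition 5.3). There exists a constant C > 0, depending only on L, γ₀ and γ, such that for all integers n ≥ 1 and all η > 0 with nL ≥ 2η, one has |S̃(n,η) − Ŝ(η)| ≤ C (e^{−(nL − 2η)} + e^{−γ e^{2η}/2}) Ŝ(η). -/
/-!
Write `t_ℓ = ½ e^{-2(ℓL - η + θ̄)} = (γ/2) e^{2(η - ℓL)}` and `s_ℓ = (γ₀/2) e^{2(η - (n-ℓ)L)}`,
so that the summands are `t e^{-t}` and `t e^{-t} e^{-s}`. Then `Ŝ - S̃` is a sum of three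
nonnegative pieces. The terms `ℓ < n` contribute `t e^{-t} (1 - e^{-s}) ≤ min(t_ℓ, s_ℓ)`, which is
`e^{-(nL - 2η)}` times a factor geometric in `|n - 2ℓ|`. The tail `ℓ ≥ n` is at most `Σ t_ℓ`, a
geometric series starting at `t_n`. On the tail `ℓ < 0` we have `t_ℓ ≥ (γ/2) e^{2η}`, which splits
off the factor `e^{-γ e^{2η}/2}` from every term. Finally `Ŝ` is bounded below uniformly in `η` by
its term with `t_ℓ ∈ [(γ/2) e^{-2L}, γ/2]`.
-/

open Real Finset

namespace CyclingSum

lemma mul_exp_neg_le_one (t : ℝ) : t * exp (-t) ≤ 1 := by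
  have : t ≤ exp t := by linarith [add_one_le_exp t]
  calc t * exp (-t) ≤ exp t * exp (-t) := by gcongr
    _ = 1 := by rw [← exp_add, add_neg_cancel, exp_zero]

lemma mul_exp_neg_le_two_mul_exp_neg_half (t : ℝ) : t * exp (-t) ≤ 2 * exp (-(t / 2)) := by
  have : t ≤ 2 * exp (t / 2) := by linarith [add_one_le_exp (t / 2)]
  calc t * exp (-t) ≤ 2 * exp (t / 2) * exp (-t) := by gcongr
    _ = 2 * exp (-(t / 2)) := by rw [mul_assoc, ← exp_add]; ring_nf

lemma mul_exp_neg_mul_one_sub_exp_neg_le_min {t s : ℝ} (ht : 0 ≤ t) (hs : 0 ≤ s) :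
    t * exp (-t) * (1 - exp (-s)) ≤ min t s := by
  have hts : t * exp (-t) ≤ t := mul_le_of_le_one_right ht (exp_le_one_iff.2 (by linarith))
  have hs₀ : 0 ≤ 1 - exp (-s) := by linarith [exp_le_one_iff.2 (neg_nonpos.2 hs)]
  have hs₁ : 1 - exp (-s) ≤ s := by linarith [add_one_le_exp (-s)]
  refine le_min ?_ ?_
  · calc t * exp (-t) * (1 - exp (-s)) ≤ t * 1 := by
          gcongr
          linarith [exp_pos (-s)]
      _ = t := mul_one t
  · calc t * exp (-t) * (1 - exp (-s)) ≤ 1 * s := by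
          gcongr
          exact mul_exp_neg_le_one t
      _ = s := one_mul s

/-- The factor `1 + δ⁻¹` absorbs `a` into `x`, and half of `e^{-x}` pays for `x`. -/
lemma add_mul_exp_neg_add_le {a x δ : ℝ} (ha : 0 ≤ a) (hδ : 0 < δ) (hx : a * δ ≤ x) :
    (a + x) * exp (-(a + x)) ≤ 2 * (1 + δ⁻¹) * exp (-a) * exp (-(x / 2)) := by
  have hx₀ : 0 ≤ x := le_trans (by positivity) hx
  have hax : a + x ≤ (1 + δ⁻¹) * x := by
    have : a ≤ δ⁻¹ * x := by rw [inv_mul_eq_div, le_div_iff₀ hδ]; exact hx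
    linarith
  calc (a + x) * exp (-(a + x)) = exp (-a) * ((a + x) * exp (-x)) := by
        rw [neg_add, exp_add]; ring
    _ ≤ exp (-a) * ((1 + δ⁻¹) * x * exp (-x)) := by gcongr
    _ = (1 + δ⁻¹) * exp (-a) * (x * exp (-x)) := by ring
    _ ≤ (1 + δ⁻¹) * exp (-a) * (2 * exp (-(x / 2))) :=
        mul_le_mul_of_nonneg_left (mul_exp_neg_le_two_mul_exp_neg_half x) (by positivity)
    _ = 2 * (1 + δ⁻¹) * exp (-a) * exp (-(x / 2)) := by ring

lemma summable_exp_neg_abs_mul_int {L : ℝ} (hL : 0 < L) :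
    Summable (fun m : ℤ => exp (-(|(m : ℝ)| * L))) := by
  have hgeom : Summable (fun k : ℕ => exp (-L) ^ k) :=
    summable_geometric_of_lt_one (exp_pos _).le (exp_lt_one_iff.2 (by linarith))
  refine Summable.of_nat_of_neg ?_ ?_ <;>
    refine hgeom.congr fun k => ?_ <;>
    simp [← exp_nat_mul]

lemma sum_range_exp_neg_abs_mul_le {L : ℝ} (hL : 0 < L) (n : ℕ) :
    ∑ l ∈ range n, exp (-(|(n : ℝ) - 2 * l| * L)) ≤ ∑' m : ℤ, exp (-(|(m : ℝ)| * L)) := by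
  have hinj : Set.InjOn (fun l : ℕ => (n : ℤ) - 2 * l) (range n) := by
    intro i _ j _ h; simp only at h; omega
  calc ∑ l ∈ range n, exp (-(|(n : ℝ) - 2 * l| * L))
      = ∑ m ∈ (range n).image (fun l : ℕ => (n : ℤ) - 2 * l), exp (-(|(m : ℝ)| * L)) := by
        rw [sum_image hinj]; push_cast; rfl
    _ ≤ ∑' m : ℤ, exp (-(|(m : ℝ)| * L)) :=
        (summable_exp_neg_abs_mul_int hL).sum_le_tsum _ fun _ _ => (exp_pos _).le

lemma tsum_int_eq_sum_range_add {G : Type*} [AddCommGroup G] [UniformSpace G]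
    [IsUniformAddGroup G] [CompleteSpace G] [T2Space G] {f : ℤ → G} (hf : Summable f) (n : ℕ) :
    ∑' l, f l = ∑ l ∈ range n, f l + ∑' k : ℕ, f (n + k) + ∑' k : ℕ, f (-(k + 1)) := by
  have hnat : Summable fun k : ℕ => f k := (summable_int_iff_summable_nat_and_neg.1 hf).1
  have hneg : Summable fun k : ℕ => f (-(k + 1)) :=
    hf.comp_injective fun i j h => by simpa using h
  rw [tsum_of_nat_of_neg_add_one hnat hneg, ← hnat.sum_add_tsum_nat_add n]
  simp only [Nat.cast_add, add_comm]

/-- `t = ½ e^{-2x}` at `x = yL - η + θ` with `θ = -½ log (2c)`, in terms of which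
`A x = t e^{-t}` and `B x = e^{-t}`. -/
noncomputable def intensity (c L η y : ℝ) : ℝ := c * exp (2 * (η - y * L))

noncomputable def term (c L η y : ℝ) : ℝ := intensity c L η y * exp (-intensity c L η y)

noncomputable def periodicSum (c L η : ℝ) : ℝ := ∑' l : ℤ, term c L η l

noncomputable def cyclingSum (c c' L η : ℝ) (n : ℕ) : ℝ :=
  ∑ l ∈ range n, term c L η l * exp (-intensity c' L η (n - l))

lemma half_exp_neg_two_mul_eq_intensity {γ : ℝ} (hγ : 0 < γ) (L η y : ℝ) :
    1 / 2 * exp (-2 * (y * L - η + -(1 / 2) * log γ)) = intensity (γ / 2) L η y := by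
  rw [intensity, show -2 * (y * L - η + -(1 / 2) * log γ) = log γ + 2 * (η - y * L) by ring,
    exp_add, exp_log hγ]
  ring

section

variable {c c' L η : ℝ}

lemma intensity_nonneg (hc : 0 ≤ c) (y : ℝ) : 0 ≤ intensity c L η y := by
  unfold intensity; positivity

lemma term_nonneg (hc : 0 ≤ c) (y : ℝ) : 0 ≤ term c L η y :=
  mul_nonneg (intensity_nonneg hc y) (exp_pos _).le

lemma term_le_intensity (hc : 0 ≤ c) (y : ℝ) : term c L η y ≤ intensity c L η y :=
  mul_le_of_le_one_right (intensity_nonneg hc y)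
    (exp_le_one_iff.2 (neg_nonpos.2 (intensity_nonneg hc y)))

lemma intensity_add_nat (y : ℝ) (k : ℕ) :
    intensity c L η (y + k) = intensity c L η y * exp (-(2 * L)) ^ k := by
  rw [intensity, intensity, ← exp_nat_mul, mul_assoc, ← exp_add]
  ring_nf

lemma exp_neg_two_mul_lt_one (hL : 0 < L) : exp (-(2 * L)) < 1 :=
  exp_lt_one_iff.2 (by linarith)

lemma hasSum_intensity_add_nat (hL : 0 < L) (y : ℝ) :
    HasSum (fun k : ℕ => intensity c L η (y + k))
      (intensity c L η y / (1 - exp (-(2 * L)))) := by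
  simp_rw [intensity_add_nat, div_eq_mul_inv]
  exact (hasSum_geometric_of_lt_one (exp_pos _).le (exp_neg_two_mul_lt_one hL)).mul_left _

lemma term_neg_succ_le (hc : 0 < c) (hL : 0 < L) (hη : 0 ≤ η) (k : ℕ) :
    term c L η (-(k + 1)) ≤
      2 * (1 + (exp (2 * L) - 1)⁻¹) * exp (-(c * exp (2 * η))) * exp (-(c * L)) ^ k := by
  set a := c * exp (2 * η)
  set x := a * (exp (2 * (k + 1) * L) - 1)
  have ha : c ≤ a := le_mul_of_one_le_right hc.le (one_le_exp (by linarith))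
  have hδ : 0 < exp (2 * L) - 1 := by linarith [add_one_le_exp (2 * L)]
  have hu : exp (2 * L) ≤ exp (2 * (k + 1) * L) := by
    gcongr; nlinarith [(Nat.cast_nonneg k : (0 : ℝ) ≤ k)]
  have hx : a * (exp (2 * L) - 1) ≤ x :=
    mul_le_mul_of_nonneg_left (by linarith) (by positivity)
  have hkx : k * (c * L) ≤ x / 2 := by
    have : 2 * (k + 1) * L ≤ exp (2 * (k + 1) * L) - 1 := by
      linarith [add_one_le_exp (2 * (k + 1) * L)]
    have := mul_le_mul ha this (by positivity) (by linarith)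
    nlinarith
  have hterm : term c L η (-(k + 1)) = (a + x) * exp (-(a + x)) := by
    have : intensity c L η (-(k + 1)) = a + x := by
      rw [intensity, show 2 * (η - -((k : ℝ) + 1) * L) = 2 * η + 2 * (k + 1) * L by ring,
        exp_add]
      ring
    rw [term, this]
  rw [hterm, ← exp_nat_mul]
  calc (a + x) * exp (-(a + x))
      ≤ 2 * (1 + (exp (2 * L) - 1)⁻¹) * exp (-a) * exp (-(x / 2)) :=
        add_mul_exp_neg_add_le (by positivity) hδ hx
    _ ≤ 2 * (1 + (exp (2 * L) - 1)⁻¹) * exp (-a) * exp (k * -(c * L)) := by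
        gcongr; linarith

lemma summable_term_neg_succ (hc : 0 < c) (hL : 0 < L) (hη : 0 ≤ η) :
    Summable fun k : ℕ => term c L η (-(k + 1)) :=
  .of_nonneg_of_le (fun _ => term_nonneg hc.le _) (term_neg_succ_le hc hL hη)
    ((summable_geometric_of_lt_one (exp_pos _).le
      (exp_lt_one_iff.2 (by nlinarith))).mul_left _)

lemma tsum_term_neg_succ_le (hc : 0 < c) (hL : 0 < L) (hη : 0 ≤ η) :
    ∑' k : ℕ, term c L η (-(k + 1)) ≤
      2 * (1 + (exp (2 * L) - 1)⁻¹) / (1 - exp (-(c * L))) * exp (-(c * exp (2 * η))) := by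
  have hρ :=
    hasSum_geometric_of_lt_one (exp_pos (-(c * L))).le (exp_lt_one_iff.2 (by nlinarith))
  calc ∑' k : ℕ, term c L η (-(k + 1))
      ≤ ∑' k : ℕ,
          2 * (1 + (exp (2 * L) - 1)⁻¹) * exp (-(c * exp (2 * η))) * exp (-(c * L)) ^ k :=
        (summable_term_neg_succ hc hL hη).tsum_le_tsum (term_neg_succ_le hc hL hη)
          (hρ.mul_left _).summable
    _ = _ := by rw [(hρ.mul_left _).tsum_eq]; ring

lemma summable_term_nat_add (hc : 0 ≤ c) (hL : 0 < L) (y : ℝ) :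
    Summable fun k : ℕ => term c L η (y + k) :=
  .of_nonneg_of_le (fun _ => term_nonneg hc _) (fun _ => term_le_intensity hc _)
    (hasSum_intensity_add_nat hL y).summable

lemma summable_term (hc : 0 < c) (hL : 0 < L) (hη : 0 ≤ η) :
    Summable fun l : ℤ => term c L η l := by
  refine .of_nat_of_neg_add_one ?_ ?_
  · simpa using summable_term_nat_add (η := η) hc.le hL 0
  · simpa using summable_term_neg_succ hc hL hη

lemma tsum_term_nat_add_le (hc : 0 ≤ c) (hL : 0 < L) (n : ℕ) :
    ∑' k : ℕ, term c L η (n + k) ≤ c / (1 - exp (-(2 * L))) * exp (-(n * L - 2 * η)) := by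
  have hq : 0 < 1 - exp (-(2 * L)) := by linarith [exp_neg_two_mul_lt_one hL]
  have hsum := hasSum_intensity_add_nat (c := c) (η := η) hL n
  calc ∑' k : ℕ, term c L η (n + k) ≤ intensity c L η n / (1 - exp (-(2 * L))) := by
        rw [← hsum.tsum_eq]
        exact (summable_term_nat_add hc hL n).tsum_le_tsum (fun _ => term_le_intensity hc _)
          hsum.summable
    _ ≤ c / (1 - exp (-(2 * L))) * exp (-(n * L - 2 * η)) := by
        rw [intensity, div_mul_eq_mul_div]
        gcongr
        nlinarith [(Nat.cast_nonneg n : (0 : ℝ) ≤ n)]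

/-- `min x y = (x + y)/2 - |x - y|/2` for the two exponents. -/
lemma min_intensity_le (n : ℕ) (y : ℝ) :
    min (intensity c L η y) (intensity c' L η (n - y)) ≤
      max c c' * exp (-(n * L - 2 * η)) * exp (-(|(n : ℝ) - 2 * y| * L)) := by
  rw [mul_assoc, ← exp_add]
  rcases le_total y (n - y) with h | h
  · calc _ ≤ intensity c' L η (n - y) := min_le_right _ _
      _ ≤ max c c' * exp (2 * (η - (n - y) * L)) := by
          unfold intensity; gcongr; exact le_max_right _ _
      _ = _ := by rw [abs_of_nonneg (by linarith)]; ring_nf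
  · calc _ ≤ intensity c L η y := min_le_left _ _
      _ ≤ max c c' * exp (2 * (η - y * L)) := by
          unfold intensity; gcongr; exact le_max_left _ _
      _ = _ := by rw [abs_of_nonpos (by linarith)]; ring_nf

lemma sum_term_mul_one_sub_exp_le (hc : 0 ≤ c) (hc' : 0 ≤ c') (hL : 0 < L) (n : ℕ) :
    ∑ l ∈ range n, term c L η l * (1 - exp (-intensity c' L η (n - l))) ≤
      max c c' * (∑' m : ℤ, exp (-(|(m : ℝ)| * L))) * exp (-(n * L - 2 * η)) := by
  calc ∑ l ∈ range n, term c L η l * (1 - exp (-intensity c' L η (n - l)))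
      ≤ ∑ l ∈ range n,
          max c c' * exp (-(n * L - 2 * η)) * exp (-(|(n : ℝ) - 2 * l| * L)) := by
        refine sum_le_sum fun l _ => ?_
        exact (mul_exp_neg_mul_one_sub_exp_neg_le_min (intensity_nonneg hc _)
          (intensity_nonneg hc' _)).trans (min_intensity_le n l)
    _ ≤ max c c' * exp (-(n * L - 2 * η)) * ∑' m : ℤ, exp (-(|(m : ℝ)| * L)) := by
        rw [← mul_sum]
        gcongr
        exact sum_range_exp_neg_abs_mul_le hL n
    _ = _ := by ring

lemma periodicSum_sub_cyclingSum (hc : 0 < c) (hL : 0 < L) (hη : 0 ≤ η) (n : ℕ) :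
    periodicSum c L η - cyclingSum c c' L η n =
      ∑ l ∈ range n, term c L η l * (1 - exp (-intensity c' L η (n - l))) +
        ∑' k : ℕ, term c L η (n + k) + ∑' k : ℕ, term c L η (-(k + 1)) := by
  rw [periodicSum, cyclingSum, tsum_int_eq_sum_range_add (summable_term hc hL hη) n]
  push_cast
  simp only [mul_sub, mul_one, sum_sub_distrib]
  ring

lemma abs_cyclingSum_sub_periodicSum_le (hc : 0 < c) (hc' : 0 ≤ c') (hL : 0 < L) :
    ∃ K > 0, ∀ (n : ℕ) (η : ℝ), 0 ≤ η →
      |cyclingSum c c' L η n - periodicSum c L η| ≤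
        K * (exp (-(n * L - 2 * η)) + exp (-(c * exp (2 * η)))) := by
  set K₁ := max c c' * ∑' m : ℤ, exp (-(|(m : ℝ)| * L))
  set K₂ := c / (1 - exp (-(2 * L)))
  set K₃ := 2 * (1 + (exp (2 * L) - 1)⁻¹) / (1 - exp (-(c * L)))
  have hK₁ : 0 ≤ K₁ :=
    mul_nonneg (le_max_of_le_left hc.le) (tsum_nonneg fun _ => (exp_pos _).le)
  have hK₂ : 0 < K₂ := div_pos hc (by linarith [exp_neg_two_mul_lt_one hL])
  have hK₃ : 0 ≤ K₃ := by
    have : 0 ≤ exp (2 * L) - 1 := by linarith [one_le_exp (by linarith : 0 ≤ 2 * L)]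
    have : exp (-(c * L)) ≤ 1 := exp_le_one_iff.2 (by nlinarith)
    unfold K₃; positivity
  refine ⟨K₁ + K₂ + K₃, by positivity, fun n η hη => ?_⟩
  have hmid := sum_term_mul_one_sub_exp_le (η := η) hc.le hc' hL n
  have hpos := tsum_term_nat_add_le (η := η) hc.le hL n
  have hneg := tsum_term_neg_succ_le hc hL hη
  have hmid₀ : 0 ≤ ∑ l ∈ range n, term c L η l * (1 - exp (-intensity c' L η (n - l))) :=
    sum_nonneg fun _ _ => mul_nonneg (term_nonneg hc.le _)
      (sub_nonneg.2 (exp_le_one_iff.2 (neg_nonpos.2 (intensity_nonneg hc' _))))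
  have hpos₀ : 0 ≤ ∑' k : ℕ, term c L η (n + k) := tsum_nonneg fun _ => term_nonneg hc.le _
  have hneg₀ : 0 ≤ ∑' k : ℕ, term c L η (-(k + 1)) := tsum_nonneg fun _ => term_nonneg hc.le _
  have hE₁ := (exp_pos (-(n * L - 2 * η))).le
  have hE₂ := (exp_pos (-(c * exp (2 * η)))).le
  rw [abs_sub_comm, periodicSum_sub_cyclingSum hc hL hη, abs_of_nonneg (by positivity)]
  nlinarith [mul_nonneg hK₁ hE₂, mul_nonneg hK₂.le hE₂, mul_nonneg hK₃ hE₁]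

lemma le_periodicSum (hc : 0 < c) (hL : 0 < L) (hη : 0 ≤ η) :
    c * exp (-(2 * L)) * exp (-c) ≤ periodicSum c L η := by
  set l := ⌈η / L⌉
  have hl₀ : η ≤ l * L := (div_le_iff₀ hL).1 (Int.le_ceil _)
  have hl₁ : l * L < η + L := by
    have := Int.ceil_lt_add_one (η / L)
    rwa [← lt_div_iff₀ hL, add_div, div_self hL.ne']
  have hlow : c * exp (-(2 * L)) ≤ intensity c L η l := by
    unfold intensity; gcongr; linarith
  have hhigh : intensity c L η l ≤ c := by
    unfold intensity
    exact mul_le_of_le_one_right hc.le (exp_le_one_iff.2 (by linarith))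
  calc c * exp (-(2 * L)) * exp (-c) ≤ term c L η l := by
        unfold term; gcongr; exact intensity_nonneg hc.le _
    _ ≤ periodicSum c L η :=
        (summable_term hc hL hη).le_tsum l fun _ _ => term_nonneg hc.le _

end

end CyclingSum

open CyclingSum in
/-- Approximation of the cycling sum by its periodic limit (Proposition 5.3). -/
theorem cycling_sum_approx
    (L γ₀ γ : ℝ) (hL : 0 < L) (hγ₀ : 0 < γ₀) (hγ : 0 < γ)
    (θ₀ θb : ℝ) (hθ₀ : θ₀ = -(1/2) * Real.log γ₀) (hθb : θb = -(1/2) * Real.log γ)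
    (A B : ℝ → ℝ)
    (hA : ∀ x, A x = 1/2 * Real.exp (-2 * x) * Real.exp (-(1/2) * Real.exp (-2 * x)))
    (hB : ∀ x, B x = Real.exp (-(1/2) * Real.exp (-2 * x)))
    (St : ℕ → ℝ → ℝ)
    (hSt : ∀ n η, St n η =
      ∑ l ∈ Finset.range n, A ((l : ℝ) * L - η + θb) * B (((n : ℝ) - l) * L - η + θ₀))
    (Sh : ℝ → ℝ)
    (hSh : ∀ η, Sh η = ∑' l : ℤ, A ((l : ℝ) * L - η + θb)) :
    ∃ C > 0, ∀ n : ℕ, 1 ≤ n → ∀ η : ℝ, 0 < η → 2 * η ≤ (n : ℝ) * L →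
      |St n η - Sh η|
        ≤ C * (Real.exp (-((n : ℝ) * L - 2 * η)) + Real.exp (-γ * Real.exp (2 * η) / 2))
            * Sh η := by
  obtain ⟨K, hK, hbound⟩ :=
    abs_cyclingSum_sub_periodicSum_le (c := γ / 2) (c' := γ₀ / 2) (by positivity) (by positivity)
      hL
  set c₀ := γ / 2 * exp (-(2 * L)) * exp (-(γ / 2))
  have hc₀ : 0 < c₀ := by positivity
  refine ⟨K / c₀, by positivity, fun n _ η hη _ => ?_⟩
  have hA' : ∀ y, A (y * L - η + θb) = term (γ / 2) L η y := fun y => by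
    rw [hA, neg_mul (1 / 2), hθb, half_exp_neg_two_mul_eq_intensity hγ, term]
  have hB' : ∀ y, B (y * L - η + θ₀) = exp (-intensity (γ₀ / 2) L η y) := fun y => by
    rw [hB, neg_mul (1 / 2), hθ₀, half_exp_neg_two_mul_eq_intensity hγ₀]
  have hSt' : St n η = cyclingSum (γ / 2) (γ₀ / 2) L η n := by
    simp only [hSt, hA', hB', cyclingSum]
  have hSh' : Sh η = periodicSum (γ / 2) L η := by
    simp only [hSh, hA', periodicSum]
  set E := exp (-(n * L - 2 * η)) + exp (-(γ / 2 * exp (2 * η)))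
  have hE : 0 ≤ E := by positivity
  rw [hSt', hSh', show -γ * exp (2 * η) / 2 = -(γ / 2 * exp (2 * η)) by ring]
  calc _ ≤ K * E := hbound n η hη.le
    _ = K / c₀ * E * c₀ := by field_simp
    _ ≤ K / c₀ * E * periodicSum (γ / 2) L η := by
        gcongr; exact le_periodicSum (by positivity) hL hη.le
end

section
/- Fourier coefficients of the cycling profile (Proposition 5.4). For every L > 0 and every q ∈ ℤ, ∫_{−∞}^{∞} A(Lx) e^{2πiqx} dx = (1/(2L)) · 2^{−πiq/L} · Γ(1 − πiq/L), where 2^{−πiq/L} = exp(−(πiq/L) log 2) and Γ is the complex Gamma function. Consequently, the 1-periodic function P(x) = Σ_{ℓ∈ℤ} A(L(ℓ−x)) has Fourier coefficients P̂(q) = ∫_0^1 P(x) e^{−2πiqx} dx = (1/(2L)) · 2^{−πiq/L} · Γ(1 − πiq/L) for every q ∈ ℤ. -/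
/-!
Writing `A (L x) = e^y exp (-e^y)` with `y = -2 L x - log 2`, the substitution `t = e^y` turns the
Fourier integral into Euler's integral for `Γ (1 - π i q / L)`; the shift by `log 2` produces the
factor `2^(-π i q / L)` and the dilation the factor `1 / (2 L)`. Since `A` decays like `|x|⁻²`,
the key step of Poisson summation applies: the Fourier coefficients of the periodization `P` of
`x ↦ A (-L x)` are the values at the integers of its Fourier transform.
-/

open MeasureTheory intervalIntegral Real Complex
open Set Filter Asymptotics
open scoped FourierTransform

theorem Complex.integral_exp_mul_sub_exp {s : ℂ} (hs : 0 < s.re) :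
    ∫ x : ℝ, cexp (s * x - rexp x) = Gamma s := by
  have subst_exp := integral_image_eq_integral_abs_deriv_smul MeasurableSet.univ
    (fun x _ => (Real.hasDerivAt_exp x).hasDerivWithinAt) Real.exp_injective.injOn
    (fun t : ℝ => (rexp (-t) : ℂ) * (t : ℂ) ^ (s - 1))
  rw [image_univ, Real.range_exp, setIntegral_univ] at subst_exp
  rw [Gamma_eq_integral hs, GammaIntegral, subst_exp]
  congr 1 with x
  rw [abs_of_pos (Real.exp_pos x), real_smul, Complex.ofReal_exp, Complex.ofReal_exp,
    cpow_def_of_ne_zero (Complex.exp_ne_zero _), Complex.log_exp (by simp [Real.pi_pos])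
    (by simp [Real.pi_pos.le]), ← Complex.exp_add, ← Complex.exp_add]
  congr 1
  push_cast
  ring

theorem Complex.integral_exp_mul_sub_exp_comp_affine {s : ℂ} (hs : 0 < s.re) (a b : ℝ) :
    ∫ x : ℝ, cexp (s * ↑(a * x + b) - ↑(rexp (a * x + b))) = |a⁻¹| • Gamma s := by
  rw [Measure.integral_comp_mul_left (fun y : ℝ => cexp (s * ↑(y + b) - ↑(rexp (y + b)))) a,
    integral_add_right_eq_self (fun y : ℝ => cexp (s * y - ↑(rexp y))) b,
    Complex.integral_exp_mul_sub_exp hs]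

theorem Real.integral_tsum_comp_add_mul_exp_eq_fourier_of_rpow_decay {f : ℝ → ℂ}
    (hc : Continuous f) {b : ℝ} (hb : 1 < b) (hf : f =O[cocompact ℝ] (|·| ^ (-b))) (m : ℤ) :
    ∫ x in (0 : ℝ)..1, (∑' n : ℤ, f (x + n)) * cexp (-(2 * π * I * m * x)) = 𝓕 f m := by
  let F : C(ℝ, ℂ) := ⟨f, hc⟩
  have hF : ∀ K : TopologicalSpace.Compacts ℝ,
      Summable fun n : ℤ => ‖(F.comp (ContinuousMap.addRight n)).restrict K‖ := fun K =>
    summable_of_isBigO (Real.summable_abs_int_rpow hb)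
      ((isBigO_norm_restrict_cocompact F (zero_lt_one.trans hb) hf K).comp_tendsto
        Int.tendsto_coe_cofinite)
  rw [show 𝓕 f m = 𝓕 (F : ℝ → ℂ) m from rfl, ← Real.fourierCoeff_tsum_comp_add hF,
    fourierCoeff_eq_intervalIntegral _ m 0]
  simp only [div_one, one_smul, zero_add, fourier_coe_apply, Function.Periodic.lift_coe,
    smul_eq_mul, zsmul_one]
  congr 1 with x
  rw [← ContinuousMap.tsum_apply (ContinuousMap.summable_of_locally_summable_norm hF), mul_comm]
  congr 2
  push_cast
  ring

noncomputable def cyclingKernel (x : ℝ) : ℝ :=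
  1 / 2 * rexp (-2 * x) * rexp (-(1 / 2) * rexp (-2 * x))

theorem cyclingKernel_eq_exp_sub_exp (x : ℝ) :
    cyclingKernel x = rexp ((-2 * x - Real.log 2) - rexp (-2 * x - Real.log 2)) := by
  have h : rexp (-2 * x - Real.log 2) = 1 / 2 * rexp (-2 * x) := by
    rw [Real.exp_sub, Real.exp_log two_pos]; ring
  rw [cyclingKernel, sub_eq_add_neg _ (rexp _), Real.exp_add, h]
  ring_nf

theorem cyclingKernel_nonneg (x : ℝ) : 0 ≤ cyclingKernel x := by
  unfold cyclingKernel; positivity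

@[fun_prop]
theorem continuous_cyclingKernel : Continuous cyclingKernel := by
  unfold cyclingKernel; fun_prop

theorem two_mul_sq_le_exp_two_mul_abs (x : ℝ) : 2 * x ^ 2 ≤ rexp (2 * |x|) := by
  nlinarith [Real.quadratic_le_exp_of_nonneg (by positivity : 0 ≤ 2 * |x|), sq_abs x,
    abs_nonneg x]

theorem cyclingKernel_mul_sq_le (x : ℝ) : cyclingKernel x * x ^ 2 ≤ 2 := by
  -- With `u = e^(-2x)` the kernel is `(u / 2) e^(-u/2)`: for `x ≥ 0` use `u x² ≤ 1 / 2`,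
  -- for `x ≤ 0` use `x² ≤ u / 2` and `u² ≤ 8 e^(u/2)`.
  set u := rexp (-2 * x) with hu
  set E := rexp (-(1 / 2) * u) with hE
  have hu0 : 0 < u := Real.exp_pos _
  have hE0 : 0 < E := Real.exp_pos _
  have hE1 : E ≤ 1 := Real.exp_le_one_iff.mpr (by nlinarith)
  have hEu : E * rexp (u / 2) = 1 := by rw [hE, ← Real.exp_add]; ring_nf; exact Real.exp_zero
  have hx2 := two_mul_sq_le_exp_two_mul_abs x
  rcases le_total 0 x with hx | hx
  · have huV : u * rexp (2 * |x|) = 1 := by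
      rw [abs_of_nonneg hx, hu, ← Real.exp_add]; ring_nf; exact Real.exp_zero
    calc cyclingKernel x * x ^ 2 = 1 / 2 * E * (u * x ^ 2) := by rw [cyclingKernel]; ring
      _ ≤ 1 / 2 * 1 * (u * (rexp (2 * |x|) / 2)) := by gcongr; linarith
      _ ≤ 2 := by nlinarith
  · have hV : rexp (2 * |x|) = u := by rw [abs_of_nonpos hx, hu]; ring_nf
    have hu2 : u ^ 2 ≤ 8 * rexp (u / 2) := by
      nlinarith [Real.quadratic_le_exp_of_nonneg (by positivity : 0 ≤ u / 2)]
    calc cyclingKernel x * x ^ 2 = 1 / 2 * E * u * x ^ 2 := by rw [cyclingKernel]; ring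
      _ ≤ 1 / 2 * E * u * (u / 2) := by gcongr; linarith
      _ = E * u ^ 2 / 4 := by ring
      _ ≤ E * (8 * rexp (u / 2)) / 4 := by gcongr
      _ = 2 := by rw [← mul_assoc, mul_comm E, mul_assoc, hEu]; ring

theorem isBigO_cyclingKernel_comp_mul {c : ℝ} (hc : c ≠ 0) :
    (fun x : ℝ => (cyclingKernel (c * x) : ℂ)) =O[cocompact ℝ] (|·| ^ (-2 : ℝ)) := by
  refine IsBigO.of_bound (2 / c ^ 2) ?_
  filter_upwards [(isCompact_singleton (x := (0 : ℝ))).compl_mem_cocompact] with x hx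
  have hx : x ≠ 0 := hx
  rw [Complex.norm_real, Real.norm_of_nonneg (cyclingKernel_nonneg _),
    Real.norm_of_nonneg (by positivity), Real.rpow_neg (abs_nonneg x), Real.rpow_two, sq_abs,
    ← div_eq_mul_inv, le_div_iff₀ (by positivity), le_div_iff₀ (by positivity)]
  simpa [mul_pow, mul_comm, mul_assoc, mul_left_comm] using cyclingKernel_mul_sq_le (c * x)

theorem integral_cyclingKernel_mul_exp {L : ℝ} (hL : 0 < L) (ξ : ℝ) :
    ∫ x : ℝ, (cyclingKernel (L * x) : ℂ) * cexp (2 * π * I * ξ * x)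
      = 1 / (2 * L) * cexp (-(π * I * ξ / L) * Real.log 2) * Gamma (1 - π * I * ξ / L) := by
  set w : ℂ := π * I * ξ / L with hw
  have hre : 0 < (1 - w).re := by simp [hw]
  have hpt : ∀ x : ℝ, (cyclingKernel (L * x) : ℂ) * cexp (2 * π * I * ξ * x)
      = cexp (-w * Real.log 2) * cexp ((1 - w) * ↑(-2 * L * x + -Real.log 2)
        - ↑(rexp (-2 * L * x + -Real.log 2))) := by
    intro x
    rw [cyclingKernel_eq_exp_sub_exp, show -2 * (L * x) - Real.log 2 = -2 * L * x + -Real.log 2 by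
      ring, Complex.ofReal_exp, ← Complex.exp_add, ← Complex.exp_add]
    congr 1
    have hL' : (L : ℂ) ≠ 0 := by exact_mod_cast hL.ne'
    rw [hw]
    field_simp
    push_cast
    ring
  simp_rw [hpt]
  rw [MeasureTheory.integral_const_mul, Complex.integral_exp_mul_sub_exp_comp_affine hre,
    abs_of_neg (by simp [hL] : (-2 * L)⁻¹ < 0), real_smul]
  push_cast
  ring

/-- Fourier coefficients of the cycling profile (Proposition 5.4). -/
theorem cycling_profile_fourier
    (L : ℝ) (hL : 0 < L)
    (A : ℝ → ℝ)
    (hA : ∀ x, A x = 1/2 * Real.exp (-2 * x) * Real.exp (-(1/2) * Real.exp (-2 * x)))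
    (P : ℝ → ℝ)
    (hP : ∀ x, P x = ∑' l : ℤ, A (L * ((l : ℝ) - x)))
    (q : ℤ) :
    (∫ x : ℝ, (A (L * x) : ℂ) * Complex.exp (2 * (Real.pi : ℂ) * Complex.I * (q : ℂ) * (x : ℂ)))
      = 1 / (2 * (L : ℂ))
        * Complex.exp (-((Real.pi : ℂ) * Complex.I * (q : ℂ) / (L : ℂ)) * (Real.log 2 : ℂ))
        * Complex.Gamma (1 - (Real.pi : ℂ) * Complex.I * (q : ℂ) / (L : ℂ))
    ∧ (∫ x in (0:ℝ)..1, (P x : ℂ) * Complex.exp (-(2 * (Real.pi : ℂ) * Complex.I * (q : ℂ) * (x : ℂ))))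
      = 1 / (2 * (L : ℂ))
        * Complex.exp (-((Real.pi : ℂ) * Complex.I * (q : ℂ) / (L : ℂ)) * (Real.log 2 : ℂ))
        * Complex.Gamma (1 - (Real.pi : ℂ) * Complex.I * (q : ℂ) / (L : ℂ)) := by
  obtain rfl : A = cyclingKernel := funext hA
  have fourier_eq := integral_cyclingKernel_mul_exp hL q
  push_cast at fourier_eq
  refine ⟨fourier_eq, ?_⟩
  let f : ℝ → ℂ := fun x => cyclingKernel (-L * x)
  have hP_tsum : ∀ x, (P x : ℂ) = ∑' n : ℤ, f (x + n) := fun x => by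
    rw [hP, Complex.ofReal_tsum, ← (Equiv.neg ℤ).tsum_eq]
    congr 1 with n
    simp only [f, Equiv.neg_apply, Int.cast_neg]
    ring_nf
  have fourier_f :
      𝓕 f q = ∫ x : ℝ, (cyclingKernel (L * x) : ℂ) * cexp (2 * π * I * q * x) := by
    rw [Real.fourier_real_eq_integral_exp_smul, ← integral_neg_eq_self]
    congr 1 with x
    simp only [f, smul_eq_mul, neg_mul, mul_comm]
    push_cast
    ring_nf
  simp_rw [hP_tsum]
  rw [Real.integral_tsum_comp_add_mul_exp_eq_fourier_of_rpow_decay (by fun_prop) one_lt_two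
    (isBigO_cyclingKernel_comp_mul (neg_ne_zero.mpr hL.ne')) q, fourier_f, fourier_eq]
end

section
/- Prefactor bound from the level-crossing integral equations (Lemma A.1). Let σ > 0, let v be continuously differentiable on [0,∞) with v(0) = 0 and v′(s) > 0 for all s, and let d be continuously differentiable with d(s) > 0 for s in the interval considered. Write v(t,s) = v(t) − v(s), d(t,s) = d(t) − d(s), F(t) = (σ √(2π v(t)))^{−1} e^{−d(t)²/(2σ²v(t))}, F(t|s) = (σ √(2π v(t,s)))^{−1} e^{−d(t,s)²/(2σ²v(t,s))}, b₀(t) = v′(t)[d(t)/v(t) − d′(t)/v′(t)] and b̃(t,s) = v′(t)[d(t,s)/v(t,s) − d′(t)/v′(t)]. Fix t > 0 and suppose ψ : (0,t] → [0,∞) is continuous and satisfies, for all 0 < t′ ≤ t, both F(t′) = ∫_0^{t′} F(t′|s) ψ(s) ds and ψ(t′) = b₀(t′) F(t′) − ∫_0^{t′} b̃(t′,s) F(t′|s) ψ(s) ds. Then, writing ψ(t) = (1/σ) c(t) e^{−d(t)²/(2σ²v(t))} and c₀(t) = b₀(t)/√(2π v(t)), one has |c(t) − c₀(t)| ≤ (2π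 v(t))^{−1/2} sup_{0 ≤ s ≤ t} |b̃(t,s)|. -/
open MeasureTheory intervalIntegral Real

/-!
Multiplying the second integral equation at `t` by `σ e^{d(t)²/(2σ²v(t))}` turns `b₀(t) F(t)` into
`c₀(t)`, so `c(t) - c₀(t)` is `-σ e^{d(t)²/(2σ²v(t))}` times `∫₀ᵗ b̃(t,s) F(t|s) ψ(s) ds`. Since
`F(t|s) ψ(s) ≥ 0`, that integral is at most `sup |b̃(t,·)|` times `∫₀ᵗ F(t|s) ψ(s) ds`, which is
`F(t)` by the first equation, and `σ e^{d(t)²/(2σ²v(t))} F(t) = (2π v(t))^{-1/2}`.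
-/

theorem lt_of_hasDerivWithinAt_pos {f f' : ℝ → ℝ} {a t : ℝ}
    (hf : ∀ s ∈ Set.Ici a, HasDerivWithinAt f (f' s) (Set.Ici a) s)
    (hf' : ∀ s ∈ Set.Ici a, 0 < f' s) (hat : a < t) : f a < f t :=
  strictMonoOn_of_hasDerivWithinAt_pos (convex_Ici a)
    (fun x hx => (hf x hx).continuousWithinAt)
    (fun x hx => (hf x (interior_subset hx)).mono interior_subset)
    (fun x hx => hf' x (interior_subset hx))
    Set.self_mem_Ici (Set.mem_Ici.mpr hat.le) hat

theorem abs_integral_mul_le_mul_integral {a b B : ℝ} {k g : ℝ → ℝ} (hab : a ≤ b)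
    (hg : IntervalIntegrable g volume a b) (hg0 : ∀ s ∈ Set.Ioc a b, 0 ≤ g s)
    (hk : ∀ s ∈ Set.Ioc a b, |k s| ≤ B) :
    |∫ s in a..b, k s * g s| ≤ B * ∫ s in a..b, g s := by
  rw [← Real.norm_eq_abs, ← intervalIntegral.integral_const_mul]
  refine norm_integral_le_of_norm_le hab (ae_of_all _ fun s hs => ?_) (hg.const_mul B)
  rw [Real.norm_eq_abs, abs_mul, abs_of_nonneg (hg0 s hs)]
  exact mul_le_mul_of_nonneg_right (hk s hs) (hg0 s hs)

theorem mul_exp_mul_gaussian_density {σ : ℝ} (hσ : σ ≠ 0) (v x : ℝ) :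
    σ * exp (x ^ 2 / (2 * σ ^ 2 * v))
        * ((σ * sqrt (2 * π * v))⁻¹ * exp (-x ^ 2 / (2 * σ ^ 2 * v)))
      = (sqrt (2 * π * v))⁻¹ := by
  rw [neg_div, exp_neg, mul_inv]
  field_simp

theorem first_passage_prefactor_bound_general
    (σ : ℝ) (hσ : 0 < σ) (t : ℝ) (ht : 0 < t)
    (v d v' : ℝ → ℝ)
    (hv0 : v 0 = 0)
    (hv : ∀ s ∈ Set.Ici (0:ℝ), HasDerivWithinAt v (v' s) (Set.Ici 0) s)
    (hv'pos : ∀ s ∈ Set.Ici (0:ℝ), 0 < v' s)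
    (F : ℝ → ℝ)
    (hF : ∀ t', F t' = (σ * Real.sqrt (2 * π * v t'))⁻¹
      * Real.exp (-(d t') ^ 2 / (2 * σ ^ 2 * v t')))
    (Fc : ℝ → ℝ → ℝ)
    (hFc : ∀ t' s, Fc t' s = (σ * Real.sqrt (2 * π * (v t' - v s)))⁻¹
      * Real.exp (-(d t' - d s) ^ 2 / (2 * σ ^ 2 * (v t' - v s))))
    (b₀ : ℝ → ℝ)
    (bt : ℝ → ℝ → ℝ)
    (ψ : ℝ → ℝ)
    (hψnn : ∀ s ∈ Set.Ioc (0:ℝ) t, 0 ≤ ψ s)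
    (heq1 : ∀ t' ∈ Set.Ioc (0:ℝ) t, F t' = ∫ s in (0:ℝ)..t', Fc t' s * ψ s)
    (heq2 : ∀ t' ∈ Set.Ioc (0:ℝ) t,
      ψ t' = b₀ t' * F t' - ∫ s in (0:ℝ)..t', bt t' s * Fc t' s * ψ s)
    (B : ℝ) (hB : ∀ s ∈ Set.Icc (0:ℝ) t, |bt t s| ≤ B) :
    |σ * Real.exp ((d t) ^ 2 / (2 * σ ^ 2 * v t)) * ψ t
        - b₀ t / Real.sqrt (2 * π * v t)|
      ≤ B / Real.sqrt (2 * π * v t) := by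
  have hvt : 0 < v t := hv0 ▸ lt_of_hasDerivWithinAt_pos hv hv'pos ht
  have hFt : 0 < F t := by rw [hF]; positivity
  have hscale : σ * exp ((d t) ^ 2 / (2 * σ ^ 2 * v t)) * F t = (sqrt (2 * π * v t))⁻¹ := by
    rw [hF]; exact mul_exp_mul_gaussian_density hσ.ne' _ _
  have hFt_eq := heq1 t ⟨ht, le_rfl⟩
  have hI : |∫ s in (0:ℝ)..t, bt t s * Fc t s * ψ s| ≤ B * F t := by
    simp_rw [mul_assoc]
    rw [hFt_eq]
    refine abs_integral_mul_le_mul_integral ht.le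
      (intervalIntegrable_of_integral_ne_zero (hFt_eq ▸ hFt.ne')) (fun s hs => ?_)
      (fun s hs => hB s (Set.Ioc_subset_Icc_self hs))
    have := hψnn s hs
    rw [hFc]; positivity
  rw [heq2 t ⟨ht, le_rfl⟩, div_eq_mul_inv (b₀ t), div_eq_mul_inv B, ← hscale]
  set c := σ * exp ((d t) ^ 2 / (2 * σ ^ 2 * v t))
  set I := ∫ s in (0:ℝ)..t, bt t s * Fc t s * ψ s
  have hc : 0 < c := by positivity
  calc |c * (b₀ t * F t - I) - b₀ t * (c * F t)| = c * |I| := by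
        rw [show c * (b₀ t * F t - I) - b₀ t * (c * F t) = -(c * I) by ring,
          abs_neg, abs_mul, abs_of_pos hc]
    _ ≤ c * (B * F t) := by gcongr
    _ = B * (c * F t) := by ring

/-- Prefactor bound from the level-crossing integral equations (Lemma A.1). -/
theorem first_passage_prefactor_bound
    (σ : ℝ) (hσ : 0 < σ) (t : ℝ) (ht : 0 < t)
    (v d v' d' : ℝ → ℝ)
    (hv0 : v 0 = 0)
    (hv : ∀ s ∈ Set.Ici (0:ℝ), HasDerivWithinAt v (v' s) (Set.Ici 0) s)
    (hv'c : ContinuousOn v' (Set.Ici 0))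
    (hv'pos : ∀ s ∈ Set.Ici (0:ℝ), 0 < v' s)
    (hd : ∀ s ∈ Set.Ici (0:ℝ), HasDerivWithinAt d (d' s) (Set.Ici 0) s)
    (hd'c : ContinuousOn d' (Set.Ici 0))
    (hdpos : ∀ s ∈ Set.Icc (0:ℝ) t, 0 < d s)
    (F : ℝ → ℝ)
    (hF : ∀ t', F t' = (σ * Real.sqrt (2 * π * v t'))⁻¹
      * Real.exp (-(d t') ^ 2 / (2 * σ ^ 2 * v t')))
    (Fc : ℝ → ℝ → ℝ)
    (hFc : ∀ t' s, Fc t' s = (σ * Real.sqrt (2 * π * (v t' - v s)))⁻¹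
      * Real.exp (-(d t' - d s) ^ 2 / (2 * σ ^ 2 * (v t' - v s))))
    (b₀ : ℝ → ℝ)
    (hb₀ : ∀ t', b₀ t' = v' t' * (d t' / v t' - d' t' / v' t'))
    (bt : ℝ → ℝ → ℝ)
    (hbt : ∀ t' s, bt t' s = v' t' * ((d t' - d s) / (v t' - v s) - d' t' / v' t'))
    (ψ : ℝ → ℝ)
    (hψc : ContinuousOn ψ (Set.Ioc 0 t))
    (hψnn : ∀ s ∈ Set.Ioc (0:ℝ) t, 0 ≤ ψ s)
    (heq1 : ∀ t' ∈ Set.Ioc (0:ℝ) t, F t' = ∫ s in (0:ℝ)..t', Fc t' s * ψ s)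
    (heq2 : ∀ t' ∈ Set.Ioc (0:ℝ) t,
      ψ t' = b₀ t' * F t' - ∫ s in (0:ℝ)..t', bt t' s * Fc t' s * ψ s)
    (B : ℝ) (hB : ∀ s ∈ Set.Icc (0:ℝ) t, |bt t s| ≤ B) :
    |σ * Real.exp ((d t) ^ 2 / (2 * σ ^ 2 * v t)) * ψ t
        - b₀ t / Real.sqrt (2 * π * v t)|
      ≤ B / Real.sqrt (2 * π * v t) :=
  first_passage_prefactor_bound_general σ hσ t ht v d v' hv0 hv hv'pos F hF Fc hFc b₀ bt ψ hψnn heq1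
    heq2 B hB
end

section
/- Lower bound on the exponent r(t,s) (equations (app7)–(app8)). Let v be continuously differentiable on [0,∞) with v(0) = 0 and v′(s) > 0 for all s, let d be continuously differentiable, and suppose there is Δ > 0 such that d(s)v′(s) − v(s)d′(s) ≥ Δ v′(s)(1 + √(v(s))) for all 0 ≤ s ≤ t. Define r(t,s) = (v(t)v(s)/v(t,s)) (d(s)/v(s) − d(t)/v(t))², where v(t,s) = v(t) − v(s). Then for all 0 < s < t: d(s)/v(s) − d(t)/v(t) ≥ Δ [v(t,s)/(v(t)v(s)) + 2(√(v(t)) − √(v(s)))/√(v(t)v(s))], and consequently r(t,s) ≥ Δ² [v(t,s)/(v(t)v(s)) + 4(√(v(t)) − √(v(s)))²/v(t,s)] ≥ Δ² (v(t,s)/v(t)) (1 + 1/v(s)). -/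
/-!
Divided by `v²`, the key inequality says exactly that `u ↦ d u / v u - Δ * (1 / v u + 2 / √(v u))`
has nonpositive derivative, and comparing the values of this function at `s` and `t` gives the
linear bound. Squaring it and multiplying by `v t * v s / (v t - v s)` gives the bound on `r(t,s)`
once the nonnegative cross term `4 (√(v t) - √(v s)) / √(v t v s)` is dropped; the last bound is
`(√(v t) + √(v s))² ≤ 4 v t`.
-/

open Real Set

noncomputable def barrier (x : ℝ) : ℝ := x⁻¹ + 2 * (√x)⁻¹

theorem exists_pos_sq_eq {x : ℝ} (hx : 0 < x) : ∃ a, 0 < a ∧ x = a ^ 2 :=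
  ⟨√x, sqrt_pos.mpr hx, (sq_sqrt hx.le).symm⟩

section Barrier

variable {x y : ℝ}

theorem barrier_le_barrier (hx : 0 < x) (hxy : x ≤ y) : barrier y ≤ barrier x := by
  have := sqrt_pos.mpr hx
  unfold barrier
  gcongr

theorem barrier_sub_barrier (hx : 0 < x) (hy : 0 < y) :
    barrier x - barrier y = (y - x) / (y * x) + 2 * (√y - √x) / √(y * x) := by
  rw [barrier, barrier, sqrt_mul hy.le]
  have := sqrt_pos.mpr hx
  have := sqrt_pos.mpr hy
  field_simp
  ring

theorem le_mul_sq_barrier_sub_barrier (hx : 0 < x) (hxy : x < y) :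
    (y - x) / (y * x) + 4 * (√y - √x) ^ 2 / (y - x)
      ≤ y * x / (y - x) * (barrier x - barrier y) ^ 2 := by
  have hy : 0 < y := hx.trans hxy
  have hcross : 0 ≤ 4 * (√y - √x) / √(y * x) :=
    div_nonneg (by linarith [sqrt_le_sqrt hxy.le]) (sqrt_nonneg _)
  have hexpand : y * x / (y - x) * (barrier x - barrier y) ^ 2
      = (y - x) / (y * x) + 4 * (√y - √x) / √(y * x) + 4 * (√y - √x) ^ 2 / (y - x) := by
    rw [barrier_sub_barrier hx hy, sqrt_mul hy.le]
    have := (sub_pos.mpr hxy).ne'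
    obtain ⟨a, ha, rfl⟩ := exists_pos_sq_eq hx
    obtain ⟨b, hb, rfl⟩ := exists_pos_sq_eq hy
    rw [sqrt_sq ha.le, sqrt_sq hb.le]
    field_simp
    ring
  linarith

theorem sub_div_mul_one_add_inv_le (hx : 0 < x) (hxy : x < y) :
    (y - x) / y * (1 + 1 / x) ≤ (y - x) / (y * x) + 4 * (√y - √x) ^ 2 / (y - x) := by
  have hy : 0 < y := hx.trans hxy
  have hsplit : (y - x) / y * (1 + 1 / x) = (y - x) / y + (y - x) / (y * x) := by
    field_simp
  suffices (y - x) / y ≤ 4 * (√y - √x) ^ 2 / (y - x) by linarith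
  obtain ⟨a, ha, rfl⟩ := exists_pos_sq_eq hx
  obtain ⟨b, hb, rfl⟩ := exists_pos_sq_eq hy
  rw [sqrt_sq ha.le, sqrt_sq hb.le, div_le_div_iff₀ hy (sub_pos.mpr hxy)]
  nlinarith [sq_nonneg (b - a)]

end Barrier

section Monotonicity

variable {v d v' d' : ℝ → ℝ} {Δ : ℝ}

theorem hasDerivAt_div_sub_barrier {u : ℝ} (hv : HasDerivAt v (v' u) u)
    (hd : HasDerivAt d (d' u) u) (hvu : 0 < v u) :
    HasDerivAt (fun x => d x / v x - Δ * barrier (v x))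
      ((d' u * v u - d u * v' u + Δ * (v' u * (1 + √(v u)))) / v u ^ 2) u := by
  have hsqrt : 0 < √(v u) := sqrt_pos.mpr hvu
  have h := (hd.div hv hvu.ne').sub
    (((hv.inv hvu.ne').add (((hv.sqrt hvu.ne').inv hsqrt.ne').const_mul 2)).const_mul Δ)
  refine h.congr_deriv ?_
  have hsq : √(v u) ^ 2 = v u := sq_sqrt hvu.le
  field_simp
  linear_combination (-(√(v u) ^ 2 + v u) * v' u * Δ) * hsq

theorem antitoneOn_div_sub_barrier {s t : ℝ}
    (hv : ∀ u ∈ Icc s t, HasDerivAt v (v' u) u) (hd : ∀ u ∈ Icc s t, HasDerivAt d (d' u) u)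
    (hpos : ∀ u ∈ Icc s t, 0 < v u)
    (hkey : ∀ u ∈ Ioo s t, Δ * v' u * (1 + √(v u)) ≤ d u * v' u - v u * d' u) :
    AntitoneOn (fun x => d x / v x - Δ * barrier (v x)) (Icc s t) := by
  have hderiv (u) (hu : u ∈ Icc s t) :=
    hasDerivAt_div_sub_barrier (Δ := Δ) (hv u hu) (hd u hu) (hpos u hu)
  refine antitoneOn_of_hasDerivWithinAt_nonpos (convex_Icc s t)
    (fun u hu => (hderiv u hu).continuousAt.continuousWithinAt)
    (fun u hu => (hderiv u (interior_subset hu)).hasDerivWithinAt) fun u hu => ?_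
  rw [interior_Icc] at hu
  have := hkey u hu
  exact div_nonpos_of_nonpos_of_nonneg (by linarith) (sq_nonneg _)

theorem strictMonoOn_Ici_of_hasDerivWithinAt_pos {a : ℝ}
    (hv : ∀ u ∈ Ici a, HasDerivWithinAt v (v' u) (Ici a) u) (hv' : ∀ u ∈ Ici a, 0 < v' u) :
    StrictMonoOn v (Ici a) :=
  strictMonoOn_of_hasDerivWithinAt_pos (convex_Ici a)
    (fun u hu => (hv u hu).continuousWithinAt)
    (fun u hu => (hv u (interior_subset hu)).mono interior_subset)
    (fun u hu => hv' u (interior_subset hu))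

end Monotonicity

theorem exponent_lower_bound_general
    (t : ℝ)
    (v d v' d' : ℝ → ℝ)
    (hv0 : v 0 = 0)
    (hv : ∀ s ∈ Set.Ici (0:ℝ), HasDerivWithinAt v (v' s) (Set.Ici 0) s)
    (hv'pos : ∀ s ∈ Set.Ici (0:ℝ), 0 < v' s)
    (hd : ∀ s ∈ Set.Ici (0:ℝ), HasDerivWithinAt d (d' s) (Set.Ici 0) s)
    (Δ : ℝ) (hΔ : 0 < Δ)
    (hkey : ∀ s ∈ Set.Icc (0:ℝ) t,
      Δ * v' s * (1 + Real.sqrt (v s)) ≤ d s * v' s - v s * d' s)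
    (s : ℝ) (hs : 0 < s) (hst : s < t) :
    Δ * ((v t - v s) / (v t * v s)
          + 2 * (Real.sqrt (v t) - Real.sqrt (v s)) / Real.sqrt (v t * v s))
        ≤ d s / v s - d t / v t
    ∧ Δ ^ 2 * ((v t - v s) / (v t * v s)
          + 4 * (Real.sqrt (v t) - Real.sqrt (v s)) ^ 2 / (v t - v s))
        ≤ v t * v s / (v t - v s) * (d s / v s - d t / v t) ^ 2
    ∧ Δ ^ 2 * ((v t - v s) / v t) * (1 + 1 / v s)
        ≤ v t * v s / (v t - v s) * (d s / v s - d t / v t) ^ 2 := by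
  have hmono := strictMonoOn_Ici_of_hasDerivWithinAt_pos hv hv'pos
  have hvpos {u : ℝ} (hu : 0 < u) : 0 < v u := hv0 ▸ hmono self_mem_Ici hu.le hu
  have hvs := hvpos hs
  have hvst : v s < v t := hmono hs.le (hs.trans hst).le hst
  have hvt := hvs.trans hvst
  have hanti := antitoneOn_div_sub_barrier (s := s) (t := t) (Δ := Δ)
    (fun u hu => (hv u (hs.le.trans hu.1)).hasDerivAt (Ici_mem_nhds (hs.trans_le hu.1)))
    (fun u hu => (hd u (hs.le.trans hu.1)).hasDerivAt (Ici_mem_nhds (hs.trans_le hu.1)))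
    (fun u hu => hvpos (hs.trans_le hu.1)) (fun u hu => hkey u ⟨hs.le.trans hu.1.le, hu.2.le⟩)
  have hlin : Δ * (barrier (v s) - barrier (v t)) ≤ d s / v s - d t / v t := by
    have := hanti (left_mem_Icc.2 hst.le) (right_mem_Icc.2 hst.le) hst.le
    dsimp only at this
    linarith
  have hsq : Δ ^ 2 * ((v t - v s) / (v t * v s) + 4 * (√(v t) - √(v s)) ^ 2 / (v t - v s))
      ≤ v t * v s / (v t - v s) * (d s / v s - d t / v t) ^ 2 := calc
    _ ≤ Δ ^ 2 * (v t * v s / (v t - v s) * (barrier (v s) - barrier (v t)) ^ 2) := by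
      gcongr
      exact le_mul_sq_barrier_sub_barrier hvs hvst
    _ = v t * v s / (v t - v s) * (Δ * (barrier (v s) - barrier (v t))) ^ 2 := by ring
    _ ≤ _ := by
      have := sub_nonneg.2 (barrier_le_barrier hvs hvst.le)
      have := sub_pos.2 hvst
      gcongr
  refine ⟨barrier_sub_barrier hvs hvt ▸ hlin, hsq, ?_⟩
  rw [mul_assoc]
  exact (mul_le_mul_of_nonneg_left (sub_div_mul_one_add_inv_le hvs hvst) (sq_nonneg Δ)).trans hsq

/-- Lower bound on the exponent r(t,s) (equations (app7)–(app8)). -/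
theorem exponent_lower_bound
    (t : ℝ) (ht : 0 < t)
    (v d v' d' : ℝ → ℝ)
    (hv0 : v 0 = 0)
    (hv : ∀ s ∈ Set.Ici (0:ℝ), HasDerivWithinAt v (v' s) (Set.Ici 0) s)
    (hv'c : ContinuousOn v' (Set.Ici 0))
    (hv'pos : ∀ s ∈ Set.Ici (0:ℝ), 0 < v' s)
    (hd : ∀ s ∈ Set.Ici (0:ℝ), HasDerivWithinAt d (d' s) (Set.Ici 0) s)
    (hd'c : ContinuousOn d' (Set.Ici 0))
    (Δ : ℝ) (hΔ : 0 < Δ)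
    (hkey : ∀ s ∈ Set.Icc (0:ℝ) t,
      Δ * v' s * (1 + Real.sqrt (v s)) ≤ d s * v' s - v s * d' s)
    (s : ℝ) (hs : 0 < s) (hst : s < t) :
    Δ * ((v t - v s) / (v t * v s)
          + 2 * (Real.sqrt (v t) - Real.sqrt (v s)) / Real.sqrt (v t * v s))
        ≤ d s / v s - d t / v t
    ∧ Δ ^ 2 * ((v t - v s) / (v t * v s)
          + 4 * (Real.sqrt (v t) - Real.sqrt (v s)) ^ 2 / (v t - v s))
        ≤ v t * v s / (v t - v s) * (d s / v s - d t / v t) ^ 2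
    ∧ Δ ^ 2 * ((v t - v s) / v t) * (1 + 1 / v s)
        ≤ v t * v s / (v t - v s) * (d s / v s - d t / v t) ^ 2 :=
  exponent_lower_bound_general t v d v' d' hv0 hv hv'pos hd Δ hΔ hkey s hs hst
end
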